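/- arXiv:1810.08687 — 9 statements merged into one kernel-verified Lean document; each statement's English description precedes it below -/
import Mathlib

section
/- For every integer n ≥ 2, the number of quadruples (x, y, z, t) of integers with 1 ≤ x < y < z < t ≤ n and gcd(z − x, t − y, n) = 1 equals (1/2)·n·J₁(n) + (1/24)·n·(n − 6)·J₂(n); equivalently, 24 times this count equals 12·n·J₁(n) + n·(n − 6)·J₂(n). -/
/-- Jordan totient function `J_k(n) = n^k * ∏_{p prime, p ∣ n} (1 - p^{-k})`, valued in `ℚ`. -/
def jordanTotient (k n : ℕ) : ℚ := (n : ℚ) ^ k * ∏ p ∈ n.primeFactors, (1 - 1 / (p : ℚ) ^ k)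

/-!
Möbius inversion over the divisors `d` of `gcd(z - x, t - y, n)` reduces the count to the number
`N(n, d)` of chains `x < y < z < t` in `[0, n)` with `x ≡ z` and `y ≡ t (mod d)`. For `n = d * m`,
writing every coordinate as `d * q + ρ` with `0 ≤ ρ < d` turns such a chain into a chain of
quotients in `[0, m)`, each step of which is strict or weak according to how the residues `r`
of `x` and `s` of `y` compare (`x, z` share the residue `r`, and `y, t` share `s`). Shifting
the weak steps away leaves a strict chain in `[0, m)`, `[0, m + 1)` or `[0, m + 2)`, so
`N = d * C(m, 4) + C(d, 2) * (C(m + 2, 4) + C(m + 1, 4))`. Eliminating `d = n / m`, this is a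
quadratic in `m` with coefficients depending on `n` only, and summing against `μ(d)` turns
`m ^ k = (n / d) ^ k` into `J_k(n)`; the constant term drops out because `J_0(n) = 0` for `n ≥ 2`.
-/

open Finset ArithmeticFunction UniqueFactorizationMonoid
open scoped ArithmeticFunction.Moebius ArithmeticFunction.zeta

theorem card_filter_coprime_eq_sum_moebius {R : Type*} [Ring R] {α : Type*} (s : Finset α)
    (f : α → ℕ) {n : ℕ} (hn : n ≠ 0) :
    (#{a ∈ s | Nat.Coprime (f a) n} : R) = ∑ e ∈ n.divisors, (μ e : R) * #{a ∈ s | e ∣ f a} := by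
  have hsum (k : ℕ) :
      ∑ e ∈ n.divisors with e ∣ k, (μ e : R) = if Nat.Coprime k n then 1 else 0 := by
    have hdiv : {e ∈ n.divisors | e ∣ k} = (Nat.gcd k n).divisors := by
      rw [← Nat.divisors_filter_dvd_of_dvd hn (Nat.gcd_dvd_right k n)]
      exact filter_congr fun e he => by
        rw [Nat.dvd_gcd_iff, and_iff_left (Nat.dvd_of_mem_divisors he)]
    have hμ := congrArg (· (Nat.gcd k n)) (coe_moebius_mul_coe_zeta (R := R))
    simp only [coe_mul_zeta_apply, intCoe_apply, one_apply] at hμ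
    simp only [hdiv, hμ, Nat.coprime_iff_gcd_eq_one]
  simp only [card_filter, Nat.cast_sum, mul_sum, Nat.cast_ite, Nat.cast_one, Nat.cast_zero,
    mul_ite, mul_one, mul_zero]
  rw [sum_comm]
  refine sum_congr rfl fun a _ => ?_
  rw [← sum_filter, hsum]

theorem sum_divisors_moebius_mul_div_pow (k : ℕ) {n : ℕ} (hn : n ≠ 0) :
    ∑ d ∈ n.divisors, (μ d : ℚ) * ((n / d : ℕ) : ℚ) ^ k = jordanTotient k n := by
  set g : ArithmeticFunction ℚ := pdiv ζ (pow k)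
  have hg : g.IsMultiplicative := isMultiplicative_zeta.natCast.pdiv isMultiplicative_pow.natCast
  have hg_apply {d : ℕ} (hd : d ≠ 0) : g d = 1 / (d : ℚ) ^ k := by
    simp [g, pdiv_apply, pow_apply, hd]
  calc ∑ d ∈ n.divisors, (μ d : ℚ) * ((n / d : ℕ) : ℚ) ^ k
      = (n : ℚ) ^ k * ∑ d ∈ n.divisors, (μ d : ℚ) * g d := by
        rw [mul_sum]
        refine sum_congr rfl fun d hd => ?_
        have hd0 : d ≠ 0 := Nat.ne_of_gt (Nat.pos_of_mem_divisors hd)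
        rw [hg_apply hd0, Nat.cast_div (Nat.dvd_of_mem_divisors hd) (by exact_mod_cast hd0)]
        have : (d : ℚ) ≠ 0 := by exact_mod_cast hd0
        rw [div_pow]
        field_simp
    -- only squarefree divisors contribute, and these are exactly the divisors of the radical
    _ = (n : ℚ) ^ k * ∑ d ∈ (radical n).divisors, (μ d : ℚ) * g d := by
        refine congrArg _ (sum_subset (Nat.divisors_subset_of_dvd hn radical_dvd_self) ?_).symm
        intro d hd hd'
        have : ¬ Squarefree d := fun hsq => hd' (Nat.mem_divisors.2
          ⟨(dvd_radical_iff hsq.isRadical hn).2 (Nat.dvd_of_mem_divisors hd), radical_ne_zero⟩)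
        simp [moebius_eq_zero_of_not_squarefree this]
    _ = jordanTotient k n := by
        rw [← hg.prodPrimeFactors_one_sub_of_squarefree _ squarefree_radical, jordanTotient,
          Nat.primeFactors_radical]
        congr 1
        exact prod_congr rfl fun p hp => by rw [hg_apply (Nat.pos_of_mem_primeFactors hp).ne']

theorem jordanTotient_zero_of_one_lt {n : ℕ} (hn : 1 < n) : jordanTotient 0 n = 0 := by
  obtain ⟨p, hp⟩ := Nat.nonempty_primeFactors.2 hn
  simp only [jordanTotient, pow_zero, div_one, sub_self, one_mul]
  exact prod_eq_zero hp rfl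

theorem Nat.cast_choose_four (K : Type*) [Field K] [CharZero K] (a : ℕ) :
    (a.choose 4 : K) = a * (a - 1) * (a - 2) * (a - 3) / 24 := by
  rw [Nat.cast_choose_eq_descPochhammer_div]
  simp [descPochhammer_succ_right, Nat.factorial]

def gapChains (a b c M : ℕ) : Finset (ℕ × ℕ × ℕ × ℕ) :=
  {v ∈ range M ×ˢ range M ×ˢ range M ×ˢ range M |
    v.1 + a ≤ v.2.1 ∧ v.2.1 + b ≤ v.2.2.1 ∧ v.2.2.1 + c ≤ v.2.2.2}

theorem card_gapChains_one_one_one (M : ℕ) : #(gapChains 1 1 1 M) = M.choose 4 := by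
  have hcard {x y z t : ℕ} (hxy : x < y) (hyz : y < z) (hzt : z < t) :
      #({x, y, z, t} : Finset ℕ) = 4 := by
    rw [card_insert_of_notMem, card_insert_of_notMem, card_pair] <;>
      simp only [ne_eq, mem_insert, mem_singleton, not_or] <;> omega
  have hpow : #((range M).powersetCard 4) = M.choose 4 := by
    rw [card_powersetCard, card_range]
  rw [← hpow]
  refine card_nbij' (fun v => {v.1, v.2.1, v.2.2.1, v.2.2.2})
    (fun s => if h : #s = 4 then
      (s.orderEmbOfFin h 0, s.orderEmbOfFin h 1, s.orderEmbOfFin h 2, s.orderEmbOfFin h 3)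
      else 0) ?_ ?_ ?_ ?_
  · rintro ⟨x, y, z, t⟩ hv
    simp only [mem_coe, gapChains, mem_filter, mem_product, mem_range] at hv
    simp only [mem_coe, mem_powersetCard, insert_subset_iff, singleton_subset_iff, mem_range]
    exact ⟨by omega, hcard hv.2.1 hv.2.2.1 hv.2.2.2⟩
  · intro s hs
    simp only [mem_coe, mem_powersetCard] at hs
    have hmem (i : Fin 4) : s.orderEmbOfFin hs.2 i < M :=
      mem_range.1 (hs.1 (orderEmbOfFin_mem _ _ _))
    have hlt {i j : Fin 4} (hij : i < j) : s.orderEmbOfFin hs.2 i < s.orderEmbOfFin hs.2 j :=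
      (s.orderEmbOfFin hs.2).strictMono hij
    simp only [mem_coe, gapChains, mem_filter, mem_product, mem_range, dif_pos hs.2]
    exact ⟨⟨hmem 0, hmem 1, hmem 2, hmem 3⟩, hlt (by decide), hlt (by decide), hlt (by decide)⟩
  · rintro ⟨x, y, z, t⟩ hv
    simp only [mem_coe, gapChains, mem_filter, mem_product, mem_range] at hv
    have hxyzt := hcard hv.2.1 hv.2.2.1 hv.2.2.2
    have hf := orderEmbOfFin_unique hxyzt (f := ![x, y, z, t]) (by simp [Fin.forall_fin_succ])
      (by simp [Fin.strictMono_iff_lt_succ, Fin.forall_fin_succ]; omega)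
    simp only [dif_pos hxyzt, ← hf]
    rfl
  · intro s hs
    simp only [mem_coe, mem_powersetCard] at hs
    conv_rhs => rw [← image_orderEmbOfFin_univ s hs.2]
    simp [dif_pos hs.2, Fin.univ_succ, image_insert]

theorem card_gapChains {a b c : ℕ} (ha : a ≤ 1) (hb : b ≤ 1) (hc : c ≤ 1) (M : ℕ) :
    #(gapChains a b c M) = (M + 3 - a - b - c).choose 4 := by
  rw [← card_gapChains_one_one_one]
  refine card_nbij' (fun v => (v.1, v.2.1 + 1 - a, v.2.2.1 + 2 - a - b, v.2.2.2 + 3 - a - b - c))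
    (fun v => (v.1, v.2.1 + a - 1, v.2.2.1 + a + b - 2, v.2.2.2 + a + b + c - 3)) ?_ ?_ ?_ ?_ <;>
  · rintro ⟨x, y, z, t⟩ hv
    simp only [mem_coe, gapChains, mem_filter, mem_product, mem_range, Prod.mk.injEq,
      true_and] at hv ⊢
    omega

theorem mul_add_lt_mul_add_iff_add_le {d r s : ℕ} (hr : r < d) (hs : s < d) (i j : ℕ) :
    d * i + r < d * j + s ↔ i + (if r < s then 0 else 1) ≤ j := by
  split_ifs <;> constructor <;> intro h <;> by_contra! h' <;> nlinarith

def congruentChains (n d : ℕ) : Finset (ℕ × ℕ × ℕ × ℕ) :=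
  {v ∈ range n ×ˢ range n ×ˢ range n ×ˢ range n |
    (v.1 < v.2.1 ∧ v.2.1 < v.2.2.1 ∧ v.2.2.1 < v.2.2.2) ∧
      v.1 ≡ v.2.2.1 [MOD d] ∧ v.2.1 ≡ v.2.2.2 [MOD d]}

theorem mk_mem_congruentChains_iff {d r s : ℕ} (hr : r < d) (hs : s < d) (m i j k l : ℕ) :
    (d * i + r, d * j + s, d * k + r, d * l + s) ∈ congruentChains (d * m) d ↔
      (i, j, k, l) ∈ gapChains (if r < s then 0 else 1) (if s < r then 0 else 1)
        (if r < s then 0 else 1) m := by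
  have hlt {ρ : ℕ} (hρ : ρ < d) (q : ℕ) : d * q + ρ < d * m ↔ q < m := by
    simpa using mul_add_lt_mul_add_iff_add_le hρ (by omega : 0 < d) q m
  rw [congruentChains, gapChains, mem_filter, mem_filter]
  simp only [mem_product, mem_range, Nat.ModEq,
    Nat.mul_add_mod_self_left, hlt hr, hlt hs, mul_add_lt_mul_add_iff_add_le hr hs,
    mul_add_lt_mul_add_iff_add_le hs hr, and_true]

theorem card_congruentChains_fiber {d r s : ℕ} (hr : r < d) (hs : s < d) (m : ℕ) :
    #{v ∈ congruentChains (d * m) d | (v.1 % d, v.2.1 % d) = (r, s)} =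
      #(gapChains (if r < s then 0 else 1) (if s < r then 0 else 1)
        (if r < s then 0 else 1) m) := by
  let φ (w : ℕ × ℕ × ℕ × ℕ) : ℕ × ℕ × ℕ × ℕ :=
    (d * w.1 + r, d * w.2.1 + s, d * w.2.2.1 + r, d * w.2.2.2 + s)
  have hd : d ≠ 0 := by omega
  have hφ : Function.Injective φ := by
    rintro ⟨i, j, k, l⟩ ⟨i', j', k', l'⟩ h
    simp only [φ, Prod.mk.injEq, add_left_inj, mul_right_inj' hd] at h
    simp only [h]
  refine (congrArg card ?_).trans (card_image_of_injective _ hφ)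
  ext ⟨x, y, z, t⟩
  simp only [mem_filter, mem_image, φ, Prod.mk.injEq]
  constructor
  · rintro ⟨hv, hxr, hys⟩
    have hzr : z % d = r := hxr ▸ (mem_filter.1 hv).2.2.1.symm
    have hts : t % d = s := hys ▸ (mem_filter.1 hv).2.2.2.symm
    have hdiv {a b : ℕ} (h : a % d = b) : d * (a / d) + b = a := by rw [← h, Nat.div_add_mod]
    refine ⟨(x / d, y / d, z / d, t / d), ?_, hdiv hxr, hdiv hys, hdiv hzr, hdiv hts⟩
    rwa [← mk_mem_congruentChains_iff hr hs, hdiv hxr, hdiv hys, hdiv hzr, hdiv hts]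
  · rintro ⟨⟨i, j, k, l⟩, hw, hx, hy, hz, ht⟩
    subst hx hy hz ht
    refine ⟨(mk_mem_congruentChains_iff hr hs m i j k l).2 hw, ?_, ?_⟩ <;>
      simp [Nat.mod_eq_of_lt, hr, hs]

theorem sum_range_product_range_ite_lt {M : Type*} [AddCommMonoid M] (d : ℕ) (A B C : M) :
    ∑ p ∈ range d ×ˢ range d, (if p.1 < p.2 then A else if p.2 < p.1 then C else B) =
      d.choose 2 • (A + C) + d • B := by
  rw [sum_product]
  induction d with
  | zero => simp
  | succ d ih =>
    have hA : ∑ r ∈ range d, (if r < d then A else if d < r then C else B) = d • A :=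
      (sum_congr rfl fun r hr => if_pos (mem_range.1 hr)).trans (by simp)
    have hC : ∑ s ∈ range d, (if d < s then A else if s < d then C else B) = d • C := by
      refine (sum_congr rfl fun s hs => ?_).trans (by simp : ∑ s ∈ range d, C = d • C)
      have := mem_range.1 hs
      rw [if_neg (by omega), if_pos this]
    simp only [sum_range_succ, sum_add_distrib, ih, hA, hC, lt_irrefl, if_false,
      Nat.choose_succ_succ' d 1, Nat.choose_one_right, add_nsmul, one_nsmul, nsmul_add]
    abel

theorem card_congruentChains {d : ℕ} (hd : 0 < d) (m : ℕ) :
    #(congruentChains (d * m) d) =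
      d.choose 2 * ((m + 2).choose 4 + (m + 1).choose 4) + d * m.choose 4 := by
  rw [← smul_eq_mul d (m.choose 4), ← smul_eq_mul (d.choose 2), ← sum_range_product_range_ite_lt,
    card_eq_sum_card_fiberwise (f := fun v => (v.1 % d, v.2.1 % d)) (t := range d ×ˢ range d)
    fun v _ => by simp [Nat.mod_lt _ hd]]
  refine sum_congr rfl fun ⟨r, s⟩ hrs => ?_
  rw [mem_product, mem_range, mem_range] at hrs
  rw [card_congruentChains_fiber hrs.1 hrs.2, card_gapChains (by split_ifs <;> simp)
    (by split_ifs <;> simp) (by split_ifs <;> simp)]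
  split_ifs <;> first | omega | rfl

noncomputable def intChains (n : ℕ) : Finset (ℤ × ℤ × ℤ × ℤ) :=
  {v ∈ Icc (1 : ℤ) n ×ˢ Icc (1 : ℤ) n ×ˢ Icc (1 : ℤ) n ×ˢ Icc (1 : ℤ) n |
    v.1 < v.2.1 ∧ v.2.1 < v.2.2.1 ∧ v.2.2.1 < v.2.2.2}

theorem card_filter_dvd_intChains (n e : ℕ) :
    #{v ∈ intChains n | e ∣ Int.gcd (v.2.2.1 - v.1) (v.2.2.2 - v.2.1)} =
      #(congruentChains n e) := by
  refine card_nbij' (fun v => ((v.1 - 1).toNat, (v.2.1 - 1).toNat, (v.2.2.1 - 1).toNat,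
      (v.2.2.2 - 1).toNat)) (fun v => ((v.1 : ℤ) + 1, (v.2.1 : ℤ) + 1, (v.2.2.1 : ℤ) + 1,
      (v.2.2.2 : ℤ) + 1)) ?_ ?_ ?_ ?_ <;> rintro ⟨x, y, z, t⟩ hv <;>
    simp only [mem_coe, intChains, congruentChains, mem_filter, mem_product, mem_Icc, mem_range,
      Int.dvd_gcd_iff, Nat.modEq_iff_dvd, Prod.mk.injEq, add_sub_add_right_eq_sub] at hv ⊢
  · simp (disch := omega) only [Int.toNat_of_nonneg, sub_sub_sub_cancel_right]
    exact ⟨by omega, by omega, hv.2⟩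
  · exact ⟨by omega, hv.2.2⟩
  · omega
  · omega

theorem card_coprime_intChains_eq_sum_moebius {n : ℕ} (hn : n ≠ 0) :
    (#{v ∈ Icc (1 : ℤ) n ×ˢ Icc (1 : ℤ) n ×ˢ Icc (1 : ℤ) n ×ˢ Icc (1 : ℤ) n |
        v.1 < v.2.1 ∧ v.2.1 < v.2.2.1 ∧ v.2.2.1 < v.2.2.2 ∧
        Int.gcd (Int.gcd (v.2.2.1 - v.1) (v.2.2.2 - v.2.1) : ℤ) (n : ℤ) = 1} : ℚ) =
      ∑ e ∈ n.divisors, (μ e : ℚ) * #(congruentChains n e) := by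
  simp_rw [← card_filter_dvd_intChains]
  rw [← card_filter_coprime_eq_sum_moebius _ _ hn, intChains, filter_filter]
  congr 2
  ext v
  simp only [Int.gcd_natCast_natCast, Nat.coprime_iff_gcd_eq_one, and_assoc]

theorem cast_card_congruentChains {n d : ℕ} (hd : d ∈ n.divisors) :
    (#(congruentChains n d) : ℚ) = n * (n - 6) / 24 * ((n / d : ℕ) : ℚ) ^ 2
      + n / 2 * ((n / d : ℕ) : ℚ) - n * (n + 6) / 24 := by
  obtain ⟨m, rfl⟩ := Nat.dvd_of_mem_divisors hd
  have hd0 : 0 < d := Nat.pos_of_mem_divisors hd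
  rw [card_congruentChains hd0, Nat.mul_div_cancel_left m hd0]
  simp only [Nat.cast_add, Nat.cast_mul, Nat.cast_choose_two, Nat.cast_choose_four]
  push_cast
  ring

theorem quadruple_count_diagram_A (n : ℕ) (hn : 2 ≤ n) :
    (((Finset.Icc (1 : ℤ) n ×ˢ Finset.Icc (1 : ℤ) n ×ˢ Finset.Icc (1 : ℤ) n ×ˢ
        Finset.Icc (1 : ℤ) n).filter
      (fun v => v.1 < v.2.1 ∧ v.2.1 < v.2.2.1 ∧ v.2.2.1 < v.2.2.2 ∧
        Int.gcd (Int.gcd (v.2.2.1 - v.1) (v.2.2.2 - v.2.1) : ℤ) (n : ℤ) = 1)).card : ℚ)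
    = (1 / 2) * n * jordanTotient 1 n + (1 / 24) * n * ((n : ℚ) - 6) * jordanTotient 2 n := by
  have hn0 : n ≠ 0 := by omega
  have hterm : ∀ e ∈ n.divisors, (μ e : ℚ) * #(congruentChains n e) =
      n * (n - 6) / 24 * ((μ e : ℚ) * ((n / e : ℕ) : ℚ) ^ 2)
        + n / 2 * ((μ e : ℚ) * ((n / e : ℕ) : ℚ) ^ 1)
        - n * (n + 6) / 24 * ((μ e : ℚ) * ((n / e : ℕ) : ℚ) ^ 0) := fun e he => by
    rw [cast_card_congruentChains he]
    ring
  rw [card_coprime_intChains_eq_sum_moebius hn0, sum_congr rfl hterm, sum_sub_distrib,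
    sum_add_distrib, ← mul_sum, ← mul_sum, ← mul_sum, sum_divisors_moebius_mul_div_pow 2 hn0,
    sum_divisors_moebius_mul_div_pow 1 hn0, sum_divisors_moebius_mul_div_pow 0 hn0,
    jordanTotient_zero_of_one_lt (by omega)]
  ring
end

section
/- For every positive integer n and every positive divisor d of n, the number of quadruples (x, y, z, t) of integers with 1 ≤ x < y < z < t ≤ n, d ∣ (z − x) and d ∣ (t − y) equals C(d, 2)·C(n/d, 2) + 3·C(d, 2)·C(n/d, 3) + d²·C(n/d, 4), where C(a, b) denotes the binomial coefficient a choose b. -/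
/-!
Write `x ∈ [1, d m]` as `x = d q + r + 1` with `0 ≤ q < m` and `0 ≤ r < d`. The order of
`[1, d m]` becomes the lexicographic order on `(q, r)`, and the divisibility conditions say that
`x, z` have a common residue `r₁` and `y, t` a common residue `r₂`. For fixed residues the
quotients form a chain `q₁ < q₂ < q₃ < q₄` if `r₁ = r₂`, `q₁ ≤ q₂ < q₃ ≤ q₄` if `r₁ < r₂`, and
`q₁ < q₂ ≤ q₃ < q₄` if `r₁ > r₂`; shifting entries makes these strict 4-chains in sets of size
`m`, `m + 2` and `m + 1`. Summing over the `d` equal and `2 C(d, 2)` unequal residue pairs gives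
`d C(m, 4) + C(d, 2) (C(m + 2, 4) + C(m + 1, 4))`, which is the stated formula.
-/

open Finset

namespace Finset
variable {α : Type*} [LinearOrder α]

theorem card_insert_insert_insert_of_lt {a b c e : α} (hab : a < b) (hbc : b < c) (hce : c < e) :
    #{a, b, c, e} = 4 :=
  card_eq_four.mpr ⟨a, b, c, e, hab.ne, (hab.trans hbc).ne, (hab.trans (hbc.trans hce)).ne,
    hbc.ne, (hbc.trans hce).ne, hce.ne, rfl⟩

theorem orderEmbOfFin_eq_of_lt {t : Finset α} (ht : #t = 4) {a b c e : α}
    (hsub : {a, b, c, e} ⊆ t) (hab : a < b) (hbc : b < c) (hce : c < e) :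
    ⇑(t.orderEmbOfFin ht) = ![a, b, c, e] := by
  refine (orderEmbOfFin_unique _ (fun i => hsub ?_) ?_).symm
  · fin_cases i <;> simp
  · refine Fin.strictMono_iff_lt_succ.mpr fun i => ?_
    fin_cases i <;> assumption

theorem card_filter_lt_lt_lt (s : Finset α) :
    #{v ∈ s ×ˢ s ×ˢ s ×ˢ s | v.1 < v.2.1 ∧ v.2.1 < v.2.2.1 ∧ v.2.2.1 < v.2.2.2} =
      (#s).choose 4 := by
  rw [← card_powersetCard]
  refine card_nbij (fun v => {v.1, v.2.1, v.2.2.1, v.2.2.2}) ?_ ?_ ?_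
  · rintro ⟨a, b, c, e⟩ hv
    simp only [coe_filter, mem_product, Set.mem_ofPred_eq] at hv
    obtain ⟨⟨ha, hb, hc, he⟩, hab, hbc, hce⟩ := hv
    refine mem_powersetCard.mpr ⟨?_, card_insert_insert_insert_of_lt hab hbc hce⟩
    simp [insert_subset_iff, ha, hb, hc, he]
  · rintro ⟨a, b, c, e⟩ hv ⟨a', b', c', e'⟩ hv' h
    simp only [coe_filter, mem_product, Set.mem_ofPred_eq] at hv hv' h
    have ht := card_insert_insert_insert_of_lt hv'.2.1 hv'.2.2.1 hv'.2.2.2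
    have h₁ := orderEmbOfFin_eq_of_lt ht h.le hv.2.1 hv.2.2.1 hv.2.2.2
    have h₂ := orderEmbOfFin_eq_of_lt ht le_rfl hv'.2.1 hv'.2.2.1 hv'.2.2.2
    simpa using h₁.symm.trans h₂
  · intro t ht
    obtain ⟨hts, ht⟩ := mem_powersetCard.mp ht
    set f := t.orderEmbOfFin ht
    have h01 : f 0 < f 1 := f.strictMono (by decide)
    have h12 : f 1 < f 2 := f.strictMono (by decide)
    have h23 : f 2 < f 3 := f.strictMono (by decide)
    refine ⟨(f 0, f 1, f 2, f 3), ?_, eq_of_subset_of_card_le ?_ ?_⟩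
    · simp only [coe_filter, mem_product, Set.mem_ofPred_eq]
      exact ⟨⟨hts (orderEmbOfFin_mem ..), hts (orderEmbOfFin_mem ..), hts (orderEmbOfFin_mem ..),
        hts (orderEmbOfFin_mem ..)⟩, h01, h12, h23⟩
    · simp [insert_subset_iff, f, orderEmbOfFin_mem]
    · rw [ht, card_insert_insert_insert_of_lt h01 h12 h23]

theorem sum_product_ite_eq_ite_lt {M : Type*} [AddCommMonoid M] (s : Finset α) (a b c : M) :
    ∑ r ∈ s ×ˢ s, (if r.1 = r.2 then a else if r.1 < r.2 then b else c) =
      #s • a + (#s).choose 2 • b + (#s).choose 2 • c := by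
  have hdiag : {r ∈ s ×ˢ s | r.1 = r.2} = s.diag := by
    ext; simp only [mem_filter, mem_product, mem_diag]; grind
  have hlt : {r ∈ {r ∈ s ×ˢ s | ¬r.1 = r.2} | r.1 < r.2} = {r ∈ s ×ˢ s | r.1 < r.2} := by
    ext; simp only [mem_filter]; grind
  have hgt : #{r ∈ {r ∈ s ×ˢ s | ¬r.1 = r.2} | ¬r.1 < r.2} = #{r ∈ s ×ˢ s | r.1 < r.2} := by
    refine card_nbij' Prod.swap Prod.swap ?_ ?_ (fun r _ => r.swap_swap)
      (fun r _ => r.swap_swap) <;>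
    · intro r hr
      simp only [coe_filter, mem_filter, mem_product, Set.mem_ofPred_eq, Prod.fst_swap,
        Prod.snd_swap] at hr ⊢
      grind
  simp only [sum_ite, sum_const, hdiag, diag_card, hlt, hgt, card_product_filter_lt, add_assoc]

end Finset

namespace Int

theorem card_filter_le_lt_le (m : ℕ) :
    #{q ∈ Ico (0 : ℤ) m ×ˢ Ico (0 : ℤ) m ×ˢ Ico (0 : ℤ) m ×ˢ Ico (0 : ℤ) m |
      q.1 ≤ q.2.1 ∧ q.2.1 < q.2.2.1 ∧ q.2.2.1 ≤ q.2.2.2} = (m + 2).choose 4 := by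
  have hcard : #(Ico (0 : ℤ) (m + 2)) = m + 2 := by rw [Int.card_Ico]; omega
  rw [← hcard, ← card_filter_lt_lt_lt]
  refine card_nbij' (fun q => (q.1, q.2.1 + 1, q.2.2.1 + 1, q.2.2.2 + 2))
    (fun v => (v.1, v.2.1 - 1, v.2.2.1 - 1, v.2.2.2 - 2)) ?_ ?_ ?_ ?_ <;>
  · rintro ⟨a, b, c, e⟩ h
    simp only [coe_filter, mem_product, mem_Ico, Set.mem_ofPred_eq, Prod.mk.injEq, true_and] at h ⊢
    omega

theorem card_filter_lt_le_lt (m : ℕ) :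
    #{q ∈ Ico (0 : ℤ) m ×ˢ Ico (0 : ℤ) m ×ˢ Ico (0 : ℤ) m ×ˢ Ico (0 : ℤ) m |
      q.1 < q.2.1 ∧ q.2.1 ≤ q.2.2.1 ∧ q.2.2.1 < q.2.2.2} = (m + 1).choose 4 := by
  have hcard : #(Ico (0 : ℤ) (m + 1)) = m + 1 := by rw [Int.card_Ico]; omega
  rw [← hcard, ← card_filter_lt_lt_lt]
  refine card_nbij' (fun q => (q.1, q.2.1, q.2.2.1 + 1, q.2.2.2 + 1))
    (fun v => (v.1, v.2.1, v.2.2.1 - 1, v.2.2.2 - 1)) ?_ ?_ ?_ ?_ <;>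
  · rintro ⟨a, b, c, e⟩ h
    simp only [coe_filter, mem_product, mem_Ico, Set.mem_ofPred_eq, Prod.mk.injEq, true_and] at h ⊢
    omega

theorem card_filter_toLex_lt_lt_lt {β : Type*} [LinearOrder β] (m : ℕ) (r : β × β) :
    #{q ∈ Ico (0 : ℤ) m ×ˢ Ico (0 : ℤ) m ×ˢ Ico (0 : ℤ) m ×ˢ Ico (0 : ℤ) m |
      toLex (q.1, r.1) < toLex (q.2.1, r.2) ∧ toLex (q.2.1, r.2) < toLex (q.2.2.1, r.1) ∧
        toLex (q.2.2.1, r.1) < toLex (q.2.2.2, r.2)} =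
      if r.1 = r.2 then m.choose 4
      else if r.1 < r.2 then (m + 2).choose 4 else (m + 1).choose 4 := by
  obtain ⟨r₁, r₂⟩ := r
  simp only [Prod.Lex.toLex_lt_toLex]
  split_ifs with heq hlt
  · have hcard : #(Ico (0 : ℤ) m) = m := by rw [Int.card_Ico]; omega
    conv_rhs => rw [← hcard, ← card_filter_lt_lt_lt]
    refine congrArg card (filter_congr fun q _ => ?_)
    simp [heq]
  · rw [← card_filter_le_lt_le]
    refine congrArg card (filter_congr fun q _ => ?_)
    simp only [hlt, hlt.not_gt, and_true, and_false, or_false]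
    omega
  · rw [← card_filter_lt_le_lt]
    refine congrArg card (filter_congr fun q _ => ?_)
    have hgt : r₂ < r₁ := lt_of_le_of_ne (not_lt.mp hlt) (Ne.symm heq)
    simp only [hgt, hgt.not_gt, and_true, and_false, or_false]
    omega

variable {d q q' r r' : ℤ}

theorem mul_add_lt_mul_add_iff_toLex (hr : r ∈ Ico 0 d) (hr' : r' ∈ Ico 0 d) :
    d * q + r < d * q' + r' ↔ toLex (q, r) < toLex (q', r') := by
  rw [mem_Ico] at hr hr'
  rw [Prod.Lex.toLex_lt_toLex]
  constructor
  · intro h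
    rcases lt_trichotomy q q' with hq | rfl | hq
    · exact Or.inl hq
    · exact Or.inr ⟨rfl, by linarith⟩
    · nlinarith
  · rintro (hq | ⟨rfl, hr⟩)
    · nlinarith
    · linarith

theorem mul_add_add_one_mem_Icc_iff {m : ℤ} (hr : r ∈ Ico 0 d) :
    d * q + r + 1 ∈ Icc 1 (d * m) ↔ q ∈ Ico 0 m := by
  rw [mem_Ico] at hr
  simp only [mem_Icc, mem_Ico]
  constructor <;> rintro ⟨h₁, h₂⟩ <;> constructor <;> nlinarith

theorem mul_add_add_one_sub_one_emod (hr : r ∈ Ico 0 d) : (d * q + r + 1 - 1) % d = r := by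
  rw [mem_Ico] at hr
  rw [add_sub_cancel_right, add_comm, Int.add_mul_emod_self_left, Int.emod_eq_of_lt hr.1 hr.2]

end Int

theorem Nat.sq_eq_add_two_mul_choose_two (d : ℕ) : d ^ 2 = d + 2 * d.choose 2 := by
  induction d with
  | zero => rfl
  | succ d ih => rw [Nat.choose_succ_succ, Nat.choose_one_right]; linear_combination ih

theorem Nat.add_two_choose_four_add_add_one_choose_four (m : ℕ) :
    (m + 2).choose 4 + (m + 1).choose 4 = m.choose 2 + 3 * m.choose 3 + 2 * m.choose 4 := by
  simp only [Nat.choose_succ_succ]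
  ring

noncomputable def quadruples (n d : ℕ) : Finset (ℤ × ℤ × ℤ × ℤ) :=
  {v ∈ Icc (1 : ℤ) n ×ˢ Icc (1 : ℤ) n ×ˢ Icc (1 : ℤ) n ×ˢ Icc (1 : ℤ) n |
    v.1 < v.2.1 ∧ v.2.1 < v.2.2.1 ∧ v.2.2.1 < v.2.2.2 ∧
      (d : ℤ) ∣ (v.2.2.1 - v.1) ∧ (d : ℤ) ∣ (v.2.2.2 - v.2.1)}

theorem card_quadruples_filter_residues {m d : ℕ} (hd : 0 < d) {r : ℤ × ℤ}
    (hr : r ∈ Ico (0 : ℤ) d ×ˢ Ico (0 : ℤ) d) :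
    #{v ∈ quadruples (d * m) d | ((v.1 - 1) % (d : ℤ), (v.2.1 - 1) % (d : ℤ)) = r} =
      #{q ∈ Ico (0 : ℤ) m ×ˢ Ico (0 : ℤ) m ×ˢ Ico (0 : ℤ) m ×ˢ Ico (0 : ℤ) m |
        toLex (q.1, r.1) < toLex (q.2.1, r.2) ∧ toLex (q.2.1, r.2) < toLex (q.2.2.1, r.1) ∧
          toLex (q.2.2.1, r.1) < toLex (q.2.2.2, r.2)} := by
  obtain ⟨r₁, r₂⟩ := r
  obtain ⟨hr₁, hr₂⟩ := mem_product.mp hr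
  symm
  refine card_nbij (fun q => (d * q.1 + r₁ + 1, d * q.2.1 + r₂ + 1, d * q.2.2.1 + r₁ + 1,
    d * q.2.2.2 + r₂ + 1)) ?_ ?_ ?_
  · rintro ⟨a, b, c, e⟩ hq
    simp only [coe_filter, mem_product, Set.mem_ofPred_eq] at hq
    obtain ⟨⟨ha, hb, hc, he⟩, hab, hbc, hce⟩ := hq
    simp only [quadruples, coe_filter, mem_filter, mem_product, Set.mem_ofPred_eq, Nat.cast_mul,
      Int.mul_add_add_one_mem_Icc_iff hr₁, Int.mul_add_add_one_mem_Icc_iff hr₂,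
      add_lt_add_iff_right, Int.mul_add_lt_mul_add_iff_toLex hr₁ hr₂,
      Int.mul_add_lt_mul_add_iff_toLex hr₂ hr₁, Int.mul_add_add_one_sub_one_emod hr₁,
      Int.mul_add_add_one_sub_one_emod hr₂]
    exact ⟨⟨⟨ha, hb, hc, he⟩, hab, hbc, hce, ⟨c - a, by ring⟩, ⟨e - b, by ring⟩⟩, trivial⟩
  · rintro ⟨a, b, c, e⟩ - ⟨a', b', c', e'⟩ - h
    simpa [hd.ne'] using h
  · rintro ⟨x, y, z, t⟩ hv
    simp only [quadruples, coe_filter, mem_filter, mem_product, Set.mem_ofPred_eq,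
      Prod.mk.injEq] at hv
    obtain ⟨⟨⟨hx, hy, hz, ht⟩, hxy, hyz, hzt, ⟨k, hk⟩, ⟨l, hl⟩⟩, hx₁, hy₂⟩ := hv
    obtain ⟨a, rfl⟩ : ∃ a, x = d * a + r₁ + 1 :=
      ⟨(x - 1) / d, by linarith [Int.mul_ediv_add_emod (x - 1) d]⟩
    obtain ⟨b, rfl⟩ : ∃ b, y = d * b + r₂ + 1 :=
      ⟨(y - 1) / d, by linarith [Int.mul_ediv_add_emod (y - 1) d]⟩
    obtain rfl : z = d * (a + k) + r₁ + 1 := by linarith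
    obtain rfl : t = d * (b + l) + r₂ + 1 := by linarith
    refine ⟨(a, b, a + k, b + l), ?_, rfl⟩
    push_cast at hx hy hz ht
    rw [Int.mul_add_add_one_mem_Icc_iff hr₁] at hx hz
    rw [Int.mul_add_add_one_mem_Icc_iff hr₂] at hy ht
    rw [add_lt_add_iff_right, Int.mul_add_lt_mul_add_iff_toLex hr₁ hr₂] at hxy hzt
    rw [add_lt_add_iff_right, Int.mul_add_lt_mul_add_iff_toLex hr₂ hr₁] at hyz
    simp only [coe_filter, mem_product, Set.mem_ofPred_eq]
    exact ⟨⟨hx, hy, hz, ht⟩, hxy, hyz, hzt⟩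

theorem quadruple_count_with_divisibility_general (n d : ℕ) (hd : 0 < d) (hdvd : d ∣ n) :
    ((Finset.Icc (1 : ℤ) n ×ˢ Finset.Icc (1 : ℤ) n ×ˢ Finset.Icc (1 : ℤ) n ×ˢ
        Finset.Icc (1 : ℤ) n).filter
      (fun v => v.1 < v.2.1 ∧ v.2.1 < v.2.2.1 ∧ v.2.2.1 < v.2.2.2 ∧
        (d : ℤ) ∣ (v.2.2.1 - v.1) ∧ (d : ℤ) ∣ (v.2.2.2 - v.2.1))).card
    = d.choose 2 * (n / d).choose 2 + 3 * (d.choose 2 * (n / d).choose 3) +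
      d ^ 2 * (n / d).choose 4 := by
  obtain ⟨m, rfl⟩ := hdvd
  rw [Nat.mul_div_cancel_left m hd]
  change #(quadruples (d * m) d) = _
  have hres : Set.MapsTo (fun v : ℤ × ℤ × ℤ × ℤ => ((v.1 - 1) % (d : ℤ), (v.2.1 - 1) % (d : ℤ)))
      (quadruples (d * m) d) ↑(Ico (0 : ℤ) d ×ˢ Ico (0 : ℤ) d) := fun v _ => by
    simp [Int.emod_nonneg, Int.emod_lt_of_pos, hd, hd.ne']
  have hcard : #(Ico (0 : ℤ) d) = d := by rw [Int.card_Ico]; omega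
  rw [card_eq_sum_card_fiberwise hres, sum_congr rfl fun r hr =>
      (card_quadruples_filter_residues hd hr).trans (Int.card_filter_toLex_lt_lt_lt m r),
    sum_product_ite_eq_ite_lt, hcard, smul_eq_mul, smul_eq_mul, smul_eq_mul, add_assoc,
    ← mul_add, Nat.add_two_choose_four_add_add_one_choose_four, Nat.sq_eq_add_two_mul_choose_two]
  ring

theorem quadruple_count_with_divisibility (n d : ℕ) (hn : 0 < n) (hd : 0 < d) (hdvd : d ∣ n) :
    ((Finset.Icc (1 : ℤ) n ×ˢ Finset.Icc (1 : ℤ) n ×ˢ Finset.Icc (1 : ℤ) n ×ˢ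
        Finset.Icc (1 : ℤ) n).filter
      (fun v => v.1 < v.2.1 ∧ v.2.1 < v.2.2.1 ∧ v.2.2.1 < v.2.2.2 ∧
        (d : ℤ) ∣ (v.2.2.1 - v.1) ∧ (d : ℤ) ∣ (v.2.2.2 - v.2.1))).card
    = d.choose 2 * (n / d).choose 2 + 3 * (d.choose 2 * (n / d).choose 3) +
      d ^ 2 * (n / d).choose 4 :=
  quadruple_count_with_divisibility_general n d hd hdvd
end

section
/- Let p, q, k, l be positive integers with gcd(p, q) = 1 and let β₁, β₂ be integers. Then the number of pairs (α, γ) ∈ ℤ² with β₁ ≤ α < β₁ + k, β₂ ≤ γ < β₂ + l, and gcd(k, l, p·γ − q·α) = 1 equals k·l·φ(gcd(k, l))/gcd(k, l) (an integer, since gcd(k, l) divides k·l). -/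
/-!
Write `d = gcd k l`. Whether `(α, γ)` is counted depends only on `(α, γ) mod d`, and since `d`
divides both side lengths, the box `[β₁, β₁ + k) × [β₂, β₂ + l)` meets every residue class of
`(ℤ/d)²` in exactly `(k/d)(l/d)` points. On `(ℤ/d)²` the linear form `p γ - q α` is the first
coordinate of an automorphism, because `p` and `q` are coprime, so it is a unit for exactly
`φ(d) · d` residue classes.
-/

open Finset

theorem card_filter_isUnit_eq_card_units (M : Type*) [Monoid M] [Fintype M]
    [DecidablePred (IsUnit : M → Prop)] [Fintype Mˣ] :
    #{x : M | IsUnit x} = Fintype.card Mˣ := by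
  rw [← card_univ, ← card_map ⟨Units.val, Units.val_injective⟩]
  congr 1
  ext x
  simp only [mem_filter, mem_univ, true_and, mem_map, Function.Embedding.coeFn_mk]
  rfl

theorem ZMod.card_filter_isUnit (n : ℕ) [NeZero n] : #{u : ZMod n | IsUnit u} = n.totient := by
  rw [card_filter_isUnit_eq_card_units, ZMod.card_units_eq_totient]

theorem ZMod.isUnit_intCast_iff_gcd_eq_one (n : ℕ) (x : ℤ) :
    IsUnit (x : ZMod n) ↔ Int.gcd n x = 1 := by
  rw [ZMod.coe_int_isUnit_iff_isCoprime, Int.isCoprime_iff_gcd_eq_one]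

theorem Int.card_Ico_filter_modEq_of_length (a v : ℤ) {r : ℤ} (hr : 0 < r) (m : ℕ) :
    #{x ∈ Ico a (a + r * m) | x ≡ v [ZMOD r]} = m := by
  have hlen : (((a + r * m : ℤ) : ℚ) - v) / r = (a - v) / r + m := by
    push_cast
    field_simp
    ring
  have := Int.Ico_filter_modEq_card a (a + r * m) hr v
  rw [hlen, Int.ceil_add_natCast, add_sub_cancel_left, max_eq_left (Int.natCast_nonneg m)] at this
  exact_mod_cast this

theorem ZMod.card_Ico_filter_intCast_eq {d k : ℕ} [NeZero d] (hdk : d ∣ k) (β : ℤ) (a : ZMod d) :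
    #{x ∈ Ico β (β + k) | ((x : ℤ) : ZMod d) = a} = k / d := by
  obtain ⟨v, rfl⟩ := ZMod.intCast_surjective a
  obtain ⟨m, rfl⟩ := hdk
  simp_rw [ZMod.intCast_eq_intCast_iff, Nat.mul_div_cancel_left m (NeZero.pos d)]
  exact_mod_cast Int.card_Ico_filter_modEq_of_length β v (r := d) (mod_cast NeZero.pos d) m

theorem ZMod.card_Ico_prod_Ico_filter_intCast_eq {d k l : ℕ} [NeZero d] (hdk : d ∣ k)
    (hdl : d ∣ l) (β₁ β₂ : ℤ) (z : ZMod d × ZMod d) :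
    #{v ∈ Ico β₁ (β₁ + k) ×ˢ Ico β₂ (β₂ + l) | ((v.1 : ZMod d), (v.2 : ZMod d)) = z}
      = k / d * (l / d) := by
  obtain ⟨a, c⟩ := z
  simp only [Prod.mk.injEq]
  rw [filter_product (fun x : ℤ => (x : ZMod d) = a) (fun x : ℤ => (x : ZMod d) = c),
    card_product, card_Ico_filter_intCast_eq hdk, card_Ico_filter_intCast_eq hdl]

theorem ZMod.card_Ico_prod_Ico_filter {d k l : ℕ} [NeZero d] (hdk : d ∣ k) (hdl : d ∣ l)
    (β₁ β₂ : ℤ) (P : ZMod d × ZMod d → Prop) [DecidablePred P] :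
    #{v ∈ Ico β₁ (β₁ + k) ×ˢ Ico β₂ (β₂ + l) | P ((v.1 : ZMod d), (v.2 : ZMod d))}
      = #{z | P z} * (k / d * (l / d)) := by
  let reduce : ℤ × ℤ → ZMod d × ZMod d := fun v => ((v.1 : ZMod d), (v.2 : ZMod d))
  rw [card_eq_sum_card_fiberwise (f := reduce) (t := {z | P z}) fun v hv => by simp_all [reduce]]
  refine sum_const_nat fun z hz => ?_
  rw [filter_filter, ← ZMod.card_Ico_prod_Ico_filter_intCast_eq hdk hdl β₁ β₂ z]
  refine congrArg Finset.card (filter_congr fun v _ => and_iff_right_of_imp fun h => ?_)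
  simpa [reduce, h] using hz

theorem card_filter_sub_mul_of_isCoprime {R : Type*} [CommRing R] [Fintype R] {p q : R}
    (hpq : IsCoprime p q) (S : R → Prop) [DecidablePred S] :
    #{z : R × R | S (p * z.2 - q * z.1)} = #{u | S u} * Fintype.card R := by
  obtain ⟨a, b, hab⟩ := hpq
  -- `(x, y) ↦ (p y - q x, a x + b y)` has determinant `-(a p + b q) = -1`
  let e : R × R ≃ R × R :=
    { toFun z := (p * z.2 - q * z.1, a * z.1 + b * z.2)
      invFun w := (p * w.2 - b * w.1, a * w.1 + q * w.2)
      left_inv z := Prod.ext (by linear_combination z.1 * hab)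
        (by linear_combination z.2 * hab)
      right_inv w := Prod.ext (by linear_combination w.1 * hab)
        (by linear_combination w.2 * hab) }
  rw [card_equiv e (t := {w | S w.1}) (by simp [e]), ← univ_product_univ, filter_product_left,
    card_product, card_univ]

theorem count_shear_pairs_general (p q k l : ℕ) (hk : 0 < k)
    (hpq : Nat.gcd p q = 1) (β₁ β₂ : ℤ) :
    (((Finset.Ico β₁ (β₁ + k) ×ˢ Finset.Ico β₂ (β₂ + l)).filter
      (fun v => Int.gcd (Nat.gcd k l : ℤ) ((p : ℤ) * v.2 - (q : ℤ) * v.1) = 1)).card : ℚ)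
    = (k * l * Nat.totient (Nat.gcd k l) : ℚ) / (Nat.gcd k l : ℚ) := by
  set d := Nat.gcd k l
  have : NeZero d := ⟨(Nat.gcd_pos_of_pos_left l hk).ne'⟩
  have hdk : d ∣ k := Nat.gcd_dvd_left k l
  have hdl : d ∣ l := Nat.gcd_dvd_right k l
  have hcoprime : IsCoprime (p : ZMod d) (q : ZMod d) := by
    simpa using (Nat.isCoprime_iff_coprime.mpr hpq).map (Int.castRingHom (ZMod d))
  have hunit (v : ℤ × ℤ) : Int.gcd d (p * v.2 - q * v.1) = 1 ↔
      IsUnit ((p : ZMod d) * (v.2 : ZMod d) - q * (v.1 : ZMod d)) := by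
    rw [← ZMod.isUnit_intCast_iff_gcd_eq_one]
    push_cast
    rfl
  rw [filter_congr fun v _ => hunit v,
    ZMod.card_Ico_prod_Ico_filter hdk hdl β₁ β₂ fun z => IsUnit ((p : ZMod d) * z.2 - q * z.1),
    card_filter_sub_mul_of_isCoprime hcoprime IsUnit, ZMod.card_filter_isUnit, ZMod.card]
  have hd : (d : ℚ) ≠ 0 := NeZero.ne _
  push_cast [Nat.cast_div hdk hd, Nat.cast_div hdl hd]
  field_simp

theorem count_shear_pairs (p q k l : ℕ) (hp : 0 < p) (hq : 0 < q) (hk : 0 < k) (hl : 0 < l)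
    (hpq : Nat.gcd p q = 1) (β₁ β₂ : ℤ) :
    (((Finset.Ico β₁ (β₁ + k) ×ˢ Finset.Ico β₂ (β₂ + l)).filter
      (fun v => Int.gcd (Nat.gcd k l : ℤ) ((p : ℤ) * v.2 - (q : ℤ) * v.1) = 1)).card : ℚ)
    = (k * l * Nat.totient (Nat.gcd k l) : ℚ) / (Nat.gcd k l : ℚ) :=
  count_shear_pairs_general p q k l hk hpq β₁ β₂
end

section
/- For integers k, l, α, β, p, q, the ℤ-submodule of ℤ² spanned by the four vectors (k, 0), (l, 0), (α, p), (β, q) is all of ℤ² if and only if gcd(p, q) = 1 and gcd(k, l, p·β − q·α) = 1. -/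
/-!
Membership of `(x, y)` in the span is a pair of linear equations in the four coefficients. The
second coordinate can be made `1` exactly when `p` and `q` are coprime. Given `u p + v q = 1`,
the relation `c p + d q = 0` forces `(c, d) = m (-q, p)` for some `m`, so the first coordinates
reached along with second coordinate `0` are exactly the combinations of `k`, `l` and
`p β - q α`; hence `(1, 0)` lies in the span iff these three are coprime.
-/

theorem Submodule.eq_top_iff_one_zero_mem_and_exists_one_mem {R : Type*} [Ring R]
    (S : Submodule R (R × R)) : S = ⊤ ↔ (1, 0) ∈ S ∧ ∃ x, (x, 1) ∈ S := by
  refine ⟨fun h ↦ h ▸ ⟨trivial, 0, trivial⟩, fun ⟨h10, x, hx1⟩ ↦ eq_top_iff.2 ?_⟩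
  rintro ⟨a, b⟩ -
  have : ((a, b) : R × R) = b • (x, 1) + (a - b * x) • (1, 0) := by
    simp [Prod.smul_mk]
  exact this ▸ S.add_mem (S.smul_mem b hx1) (S.smul_mem _ h10)

theorem mem_span_lattice_iff {R : Type*} [Semiring R] (k l α β p q x y : R) :
    (x, y) ∈ Submodule.span R ({(k, 0), (l, 0), (α, p), (β, q)} : Set (R × R)) ↔
      ∃ a b c d : R, a * k + b * l + c * α + d * β = x ∧ c * p + d * q = y := by
  simp only [Submodule.mem_span_insert, Submodule.mem_span_singleton]
  constructor
  · rintro ⟨a, _, ⟨b, _, ⟨c, _, ⟨d, rfl⟩, rfl⟩, rfl⟩, h⟩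
    refine ⟨a, b, c, d, ?_⟩
    simp_all [add_assoc]
  · rintro ⟨a, b, c, d, rfl, rfl⟩
    exact ⟨a, _, ⟨b, _, ⟨c, _, ⟨d, rfl⟩, rfl⟩, rfl⟩, by simp [add_assoc]⟩

theorem exists_mem_span_lattice_one_iff {R : Type*} [CommSemiring R] (k l α β p q : R) :
    (∃ x, (x, 1) ∈ Submodule.span R ({(k, 0), (l, 0), (α, p), (β, q)} : Set (R × R))) ↔
      IsCoprime p q := by
  simp only [mem_span_lattice_iff, IsCoprime]
  exact ⟨fun ⟨_, _, _, c, d, _, h⟩ ↦ ⟨c, d, h⟩, fun ⟨c, d, h⟩ ↦ ⟨_, 0, 0, c, d, rfl, h⟩⟩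

theorem one_zero_mem_span_lattice_iff {R : Type*} [CommRing R] {k l α β p q : R}
    (hpq : IsCoprime p q) :
    (1, 0) ∈ Submodule.span R ({(k, 0), (l, 0), (α, p), (β, q)} : Set (R × R)) ↔
      ∃ a b m : R, a * k + b * l + m * (p * β - q * α) = 1 := by
  rw [mem_span_lattice_iff]
  constructor
  · rintro ⟨a, b, c, d, h1, h0⟩
    obtain ⟨u, v, huv⟩ := hpq
    refine ⟨a, b, d * u - c * v, ?_⟩
    linear_combination h1 - (u * α + v * β) * h0 + (c * α + d * β) * huv
  · rintro ⟨a, b, m, h⟩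
    exact ⟨a, b, -(m * q), m * p, by linear_combination h, by ring⟩

theorem Int.gcd_gcd_eq_one_iff (k l m : ℤ) :
    Int.gcd (Int.gcd k l : ℤ) m = 1 ↔ ∃ a b c : ℤ, a * k + b * l + c * m = 1 := by
  rw [← Int.isCoprime_iff_gcd_eq_one]
  constructor
  · rintro ⟨s, t, h⟩
    refine ⟨s * Int.gcdA k l, s * Int.gcdB k l, t, ?_⟩
    rw [Int.gcd_eq_gcd_ab k l] at h
    linear_combination h
  · rintro ⟨a, b, c, h⟩
    obtain ⟨k', hk⟩ := Int.gcd_dvd_left k l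
    obtain ⟨l', hl⟩ := Int.gcd_dvd_right k l
    exact ⟨a * k' + b * l', c, by linear_combination h - a * hk - b * hl⟩

theorem lattice_generation_iff (k l α β p q : ℤ) :
    Submodule.span ℤ ({(k, 0), (l, 0), (α, p), (β, q)} : Set (ℤ × ℤ)) = ⊤ ↔
      Int.gcd p q = 1 ∧ Int.gcd (Int.gcd k l : ℤ) (p * β - q * α) = 1 := by
  rw [Submodule.eq_top_iff_one_zero_mem_and_exists_one_mem, exists_mem_span_lattice_one_iff,
    ← Int.isCoprime_iff_gcd_eq_one, Int.gcd_gcd_eq_one_iff, and_comm]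
  exact and_congr_right one_zero_mem_span_lattice_iff
end

section
/- Let p, q, k, l, m be positive integers with gcd(p, q) = 1. Then the number of pairs (α, β) ∈ ℤ² with 0 ≤ α < k + l + m, 0 ≤ β < m, and gcd(k + l + m, m, p·β − q·α + (p + q)·l) = 1 equals (k + l + m)·m·φ(g)/g, where g = gcd(k + l + m, m). -/
/-!
With `g = gcd(k + l + m, m)`, the coprimality condition only depends on `(α, β)` modulo `g`,
and the box `[0, k + l + m) × [0, m)` consists of `(k + l + m) m / g²` complete residue
systems of `(ℤ/g)²`. On `(ℤ/g)²` the form `(α, β) ↦ pβ - qα` is surjective because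
`gcd(p, q) = 1`, so each of its fibres has `g` elements, and the shifted form hits the `φ(g)`
units exactly `g φ(g)` times.
-/

open Finset

theorem Finset.card_filter_comp_of_card_fiber_eq {α β : Type*} [Fintype β] [DecidableEq β]
    {s : Finset α} {f : α → β} {n : ℕ} (hf : ∀ y, #{x ∈ s | f x = y} = n)
    (P : β → Prop) [DecidablePred P] :
    #{x ∈ s | P (f x)} = #{y | P y} * n := by
  rw [card_eq_sum_card_fiberwise (t := {y | P y}) fun x hx => by simpa using (mem_filter.1 hx).2]
  refine sum_const_nat fun y hy => ?_
  rw [filter_filter, ← hf y]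
  congr 1
  exact filter_congr fun x _ => ⟨And.right, fun h => ⟨h ▸ (mem_filter.1 hy).2, h⟩⟩

theorem AddMonoidHom.card_fiber_mul_card_eq_card {G H : Type*} [AddGroup G] [Fintype G]
    [AddGroup H] [Fintype H] [DecidableEq H] (f : G →+ H) (hf : Function.Surjective f) (y : H) :
    #{x | f x = y} * Fintype.card H = Fintype.card G := by
  rw [← card_univ (α := G),
    card_eq_sum_card_fiberwise (f := f) (s := univ) (t := univ) fun _ _ => mem_univ _,
    sum_const_nat fun z _ => AddMonoidHom.card_fiber_eq_of_mem_range f (hf z) (hf y),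
    card_univ, mul_comm]

theorem card_filter_isUnit (R : Type*) [Monoid R] [Fintype R] [DecidableEq R] :
    #{x : R | IsUnit x} = Fintype.card Rˣ := by
  rw [← card_univ, ← card_map ⟨Units.val, Units.val_injective⟩]
  congr 1
  ext x
  simp [IsUnit, eq_comm]

theorem card_filter_isUnit_mul_sub_mul_add {R : Type*} [CommRing R] [Fintype R] [DecidableEq R]
    {P Q : R} (hPQ : IsCoprime P Q) (K : R) :
    #{v : R × R | IsUnit (P * v.2 - Q * v.1 + K)} = Fintype.card Rˣ * Fintype.card R := by
  let f : R × R →+ R :=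
    { toFun := fun v => P * v.2 - Q * v.1
      map_zero' := by simp
      map_add' := fun v w => by simp only [Prod.snd_add, Prod.fst_add]; ring }
  have hf : Function.Surjective f := by
    obtain ⟨A, B, hAB⟩ := hPQ
    refine fun y => ⟨(-(y * B), y * A), ?_⟩
    simp only [f, AddMonoidHom.coe_mk, ZeroHom.coe_mk]
    linear_combination y * hAB
  have hfiber (y : R) : #{v : R × R | P * v.2 - Q * v.1 + K = y} = Fintype.card R := by
    have h := f.card_fiber_mul_card_eq_card hf (y - K)
    rw [Fintype.card_prod] at h
    have := Nat.eq_of_mul_eq_mul_right Fintype.card_pos h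
    simpa [f, eq_sub_iff_add_eq] using this
  rw [card_filter_comp_of_card_fiber_eq hfiber IsUnit, card_filter_isUnit]

theorem card_filter_Ico_intCast_eq (g a : ℕ) [NeZero g] (c : ZMod g) :
    #{x ∈ Ico (0 : ℤ) (g * a) | ((x : ℤ) : ZMod g) = c} = a := by
  obtain ⟨v, hv, rfl⟩ : ∃ v : ℕ, v < g ∧ ((v : ℤ) : ZMod g) = c :=
    ⟨c.val, c.val_lt, by simp⟩
  simp_rw [ZMod.intCast_eq_intCast_iff]
  have hg : (0 : ℚ) < g := by simp [Nat.pos_of_neZero]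
  have hvg : (v : ℚ) / g < 1 := (div_lt_one hg).2 (by exact_mod_cast hv)
  have hv0 : (0 : ℚ) ≤ v / g := by positivity
  have h1 : ⌈((g : ℚ) * a - v) / g⌉ = a := by
    rw [Int.ceil_eq_iff, sub_div, mul_div_cancel_left₀ _ hg.ne']
    push_cast
    constructor <;> linarith
  have h2 : ⌈(-v : ℚ) / g⌉ = 0 := by
    rw [Int.ceil_eq_iff, neg_div]
    push_cast
    constructor <;> linarith
  have := Int.Ico_filter_modEq_card 0 (g * a) (r := g) (by simp [Nat.pos_of_neZero]) v
  push_cast at this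
  rw [zero_sub, h1, h2] at this
  omega

theorem card_filter_Ico_prod_Ico_intCast (g a b : ℕ) [NeZero g] (P : ZMod g × ZMod g → Prop)
    [DecidablePred P] :
    #{v ∈ Ico (0 : ℤ) (g * a) ×ˢ Ico (0 : ℤ) (g * b) | P ((v.1 : ZMod g), (v.2 : ZMod g))}
      = #{c | P c} * (a * b) := by
  refine card_filter_comp_of_card_fiber_eq (fun c => ?_) P
  simp only [Prod.ext_iff]
  rw [filter_product (fun x : ℤ => (x : ZMod g) = c.1) (fun y : ℤ => (y : ZMod g) = c.2),
    card_product, card_filter_Ico_intCast_eq, card_filter_Ico_intCast_eq]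

theorem count_shear_pairs_diagram_B_general (p q k l m : ℕ) (hm : 0 < m) (hpq : Nat.gcd p q = 1) :
    (((Finset.Ico (0 : ℤ) ((k : ℤ) + l + m) ×ˢ Finset.Ico (0 : ℤ) (m : ℤ)).filter
      (fun v => Int.gcd (Nat.gcd (k + l + m) m : ℤ)
        ((p : ℤ) * v.2 - (q : ℤ) * v.1 + ((p : ℤ) + q) * l) = 1)).card : ℚ)
    = ((k + l + m) * m * Nat.totient (Nat.gcd (k + l + m) m) : ℚ) /
        (Nat.gcd (k + l + m) m : ℚ) := by
  set g := Nat.gcd (k + l + m) m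
  have : NeZero g := ⟨(Nat.gcd_pos_of_pos_right _ hm).ne'⟩
  obtain ⟨a, ha⟩ : g ∣ k + l + m := Nat.gcd_dvd_left _ _
  obtain ⟨b, hb⟩ : g ∣ m := Nat.gcd_dvd_right _ _
  have hPQ : IsCoprime (p : ZMod g) q := by
    simpa using (Nat.isCoprime_iff_coprime.2 hpq).map (Int.castRingHom (ZMod g))
  have hunit (v : ℤ × ℤ) : Int.gcd g (p * v.2 - q * v.1 + (p + q) * l) = 1 ↔
      IsUnit ((p : ZMod g) * (v.2 : ZMod g) - q * (v.1 : ZMod g) + (p + q) * l) := by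
    rw [← Int.isCoprime_iff_gcd_eq_one, ← ZMod.coe_int_isUnit_iff_isCoprime]
    push_cast
    rfl
  rw [filter_congr fun v _ => hunit v, show (k : ℤ) + l + m = g * a by exact_mod_cast ha,
    show (m : ℤ) = g * b by exact_mod_cast hb,
    card_filter_Ico_prod_Ico_intCast g a b
      fun c => IsUnit ((p : ZMod g) * c.2 - q * c.1 + (p + q) * l),
    card_filter_isUnit_mul_sub_mul_add hPQ, ZMod.card_units_eq_totient, ZMod.card,
    eq_div_iff (by exact_mod_cast NeZero.ne g), show (k : ℚ) + l + m = g * a by exact_mod_cast ha,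
    show (m : ℚ) = g * b by exact_mod_cast hb]
  push_cast
  ring

theorem count_shear_pairs_diagram_B (p q k l m : ℕ) (hp : 0 < p) (hq : 0 < q) (hk : 0 < k)
    (hl : 0 < l) (hm : 0 < m) (hpq : Nat.gcd p q = 1) :
    (((Finset.Ico (0 : ℤ) ((k : ℤ) + l + m) ×ˢ Finset.Ico (0 : ℤ) (m : ℤ)).filter
      (fun v => Int.gcd (Nat.gcd (k + l + m) m : ℤ)
        ((p : ℤ) * v.2 - (q : ℤ) * v.1 + ((p : ℤ) + q) * l) = 1)).card : ℚ)
    = ((k + l + m) * m * Nat.totient (Nat.gcd (k + l + m) m) : ℚ) /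
        (Nat.gcd (k + l + m) m : ℚ) :=
  count_shear_pairs_diagram_B_general p q k l m hm hpq
end

section
/- For every positive integer n, the sum of k·l²·φ(gcd(k, l))/gcd(k, l) over all quadruples (p, q, k, l) of positive integers with k > l and p·k + q·l = n equals ∑_{d ∣ n} μ(d)·d²·F(n/d), where F(m) = (1/24)·σ₄(m) + (1/2)·σ₃(m) − ((12·m + 1)/24)·σ₂(m). -/
/-!
Since φ(g)/g = ∑_{d ∣ g} μ(d)/d, exchanging the sums and writing (k, l) = (d k', d l') turns the
left side into ∑_{d ∣ n} μ(d) d² T(n/d), where T(m) = ∑ k l² over the solutions of p k + q l = m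
with k > l. That T = F is Liouville's method: the shear (p, q, k, l) ↦ (p, p + q, k - l, l) is a
bijection from the solutions with k > l onto those with p < q and raises the weight
W = -k l (k + l)/2 by exactly k l². With the symmetry (p, q, k, l) ↦ (q, p, l, k) this gives
2T = ∑_{k = l} W - ∑_{p = q} W, and both diagonal sums are elementary divisor sums.
-/

/-- Divisor function `σ_k(n) = ∑_{d ∣ n} d^k`. -/
def sigmaFn (k n : ℕ) : ℕ := ∑ d ∈ n.divisors, d ^ k

/-- `F(m) = (1/24)σ₄(m) + (1/2)σ₃(m) − ((12m+1)/24)σ₂(m)`. -/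
def Ffn (m : ℕ) : ℚ :=
  (1 / 24) * sigmaFn 4 m + (1 / 2) * sigmaFn 3 m - ((12 * (m : ℚ) + 1) / 24) * sigmaFn 2 m

open Finset

namespace Liouville

section Involution

variable {α M : Type*} [AddCommMonoid M] {σ : α → α} {s : Finset α}

theorem sum_filter_comp_of_involutive (hσ : Function.Involutive σ) (hs : ∀ v ∈ s, σ v ∈ s)
    (p : α → Prop) [DecidablePred p] (f : α → M) :
    ∑ v ∈ s with p v, f v = ∑ v ∈ s with p (σ v), f (σ v) := by
  refine sum_nbij' σ σ ?_ ?_ (fun v _ => hσ v) (fun v _ => hσ v) (fun v _ => by rw [hσ v])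
  · intro v hv
    simp only [mem_filter] at hv ⊢
    exact ⟨hs v hv.1, by rw [hσ v]; exact hv.2⟩
  · intro v hv
    simp only [mem_filter] at hv ⊢
    exact ⟨hs v hv.1, hv.2⟩

theorem sum_eq_sum_filter_eq_add_two_nsmul (hσ : Function.Involutive σ)
    (hs : ∀ v ∈ s, σ v ∈ s) {i j : α → ℕ} (hij : ∀ v, i (σ v) = j v) (f : α → M)
    (hf : ∀ v, f (σ v) = f v) :
    ∑ v ∈ s, f v = ∑ v ∈ s with i v = j v, f v + 2 • ∑ v ∈ s with j v < i v, f v := by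
  have hji : ∀ v, j (σ v) = i v := fun v => by rw [← hij, hσ v]
  have h_swap : ∑ v ∈ s with i v < j v, f v = ∑ v ∈ s with j v < i v, f v := by
    simp only [sum_filter_comp_of_involutive hσ hs (fun v => i v < j v), hij, hji, hf]
  rw [two_nsmul, ← add_assoc]
  nth_rewrite 2 [← h_swap]
  simp only [sum_filter, ← sum_add_distrib]
  refine sum_congr rfl fun v _ => ?_
  rcases lt_trichotomy (i v) (j v) with h | h | h
  · simp [h, h.ne, h.not_gt]
  · simp [h]
  · simp [h, h.ne', h.not_gt]

end Involution

-- `v = (p, q, k, l)`; the bounds `≤ n` are automatic for positive solutions of `p k + q l = n`.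
def solutions (n : ℕ) : Finset (ℕ × ℕ × ℕ × ℕ) :=
  (Icc 1 n ×ˢ Icc 1 n ×ˢ Icc 1 n ×ˢ Icc 1 n).filter
    fun v => v.1 * v.2.2.1 + v.2.1 * v.2.2.2 = n

theorem mem_solutions {n a b x y : ℕ} :
    (a, b, x, y) ∈ solutions n ↔ 0 < a ∧ 0 < b ∧ 0 < x ∧ 0 < y ∧ a * x + b * y = n := by
  simp only [solutions, mem_filter, mem_product, mem_Icc]
  constructor
  · rintro ⟨⟨⟨ha, -⟩, ⟨hb, -⟩, ⟨hx, -⟩, ⟨hy, -⟩⟩, he⟩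
    exact ⟨ha, hb, hx, hy, he⟩
  · rintro ⟨ha, hb, hx, hy, rfl⟩
    refine ⟨⟨⟨ha, ?_⟩, ⟨hb, ?_⟩, ⟨hx, ?_⟩, ⟨hy, ?_⟩⟩, rfl⟩ <;> nlinarith

def swapTerms (v : ℕ × ℕ × ℕ × ℕ) : ℕ × ℕ × ℕ × ℕ := (v.2.1, v.1, v.2.2.2, v.2.2.1)

def swapFactors (v : ℕ × ℕ × ℕ × ℕ) : ℕ × ℕ × ℕ × ℕ := (v.2.2.1, v.2.2.2, v.1, v.2.1)

theorem swapTerms_involutive : Function.Involutive swapTerms := fun _ => rfl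

theorem swapFactors_involutive : Function.Involutive swapFactors := fun _ => rfl

theorem swapTerms_mem_solutions (n : ℕ) :
    ∀ v ∈ solutions n, swapTerms v ∈ solutions n := by
  rintro ⟨a, b, x, y⟩ hv
  obtain ⟨ha, hb, hx, hy, he⟩ := mem_solutions.1 hv
  exact mem_solutions.2 ⟨hb, ha, hy, hx, by rw [← he, add_comm]⟩

theorem swapFactors_mem_solutions (n : ℕ) :
    ∀ v ∈ solutions n, swapFactors v ∈ solutions n := by
  rintro ⟨a, b, x, y⟩ hv
  obtain ⟨ha, hb, hx, hy, he⟩ := mem_solutions.1 hv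
  exact mem_solutions.2 ⟨hx, hy, ha, hb, by rw [← he, mul_comm x, mul_comm y]⟩

def weight (v : ℕ × ℕ × ℕ × ℕ) : ℚ :=
  -((v.2.2.1 : ℚ) * v.2.2.2 * (v.2.2.1 + v.2.2.2)) / 2

theorem weight_swapTerms (v : ℕ × ℕ × ℕ × ℕ) : weight (swapTerms v) = weight v := by
  simp only [weight, swapTerms]; ring

def shear (v : ℕ × ℕ × ℕ × ℕ) : ℕ × ℕ × ℕ × ℕ := (v.1, v.1 + v.2.1, v.2.2.1 - v.2.2.2, v.2.2.2)

theorem weight_shear {v : ℕ × ℕ × ℕ × ℕ} (h : v.2.2.2 ≤ v.2.2.1) :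
    weight (shear v) = weight v + v.2.2.1 * v.2.2.2 ^ 2 := by
  simp only [weight, shear, Nat.cast_sub h]; ring

theorem sum_weight_shear (m : ℕ) :
    ∑ v ∈ solutions m with v.2.2.2 < v.2.2.1, weight (shear v) =
      ∑ v ∈ solutions m with v.1 < v.2.1, weight v := by
  refine sum_nbij' shear (fun v => (v.1, v.2.1 - v.1, v.2.2.1 + v.2.2.2, v.2.2.2))
    ?_ ?_ ?_ ?_ (fun _ _ => rfl)
  · rintro ⟨a, b, x, y⟩ hv
    simp only [mem_filter, mem_solutions, shear] at hv ⊢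
    obtain ⟨⟨ha, hb, hx, hy, he⟩, hlt⟩ := hv
    obtain ⟨k, rfl⟩ := Nat.exists_eq_add_of_lt hlt
    refine ⟨⟨ha, by omega, by omega, hy, ?_⟩, by omega⟩
    rw [show y + k + 1 - y = k + 1 by omega]
    linarith
  · rintro ⟨a, b, x, y⟩ hv
    simp only [mem_filter, mem_solutions] at hv ⊢
    obtain ⟨⟨ha, hb, hx, hy, he⟩, hlt⟩ := hv
    obtain ⟨k, rfl⟩ := Nat.exists_eq_add_of_lt hlt
    refine ⟨⟨ha, by omega, by omega, hy, ?_⟩, by omega⟩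
    rw [show a + k + 1 - a = k + 1 by omega]
    linarith
  · rintro ⟨a, b, x, y⟩ hv
    simp only [mem_filter, shear, Prod.mk.injEq, true_and, and_true] at hv ⊢
    omega
  · rintro ⟨a, b, x, y⟩ hv
    simp only [mem_filter, shear, Prod.mk.injEq, true_and, and_true] at hv ⊢
    omega

def sumMulSq (m : ℕ) : ℚ :=
  ∑ v ∈ solutions m with v.2.2.2 < v.2.2.1, (v.2.2.1 : ℚ) * v.2.2.2 ^ 2

theorem sumMulSq_eq_sub (m : ℕ) :
    sumMulSq m = ∑ v ∈ solutions m with v.1 < v.2.1, weight v -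
      ∑ v ∈ solutions m with v.2.2.2 < v.2.2.1, weight v := by
  rw [← sum_weight_shear, eq_sub_iff_add_eq, sumMulSq, ← sum_add_distrib]
  exact sum_congr rfl fun v hv => by rw [weight_shear (mem_filter.1 hv).2.le, add_comm]

theorem two_mul_sumMulSq (m : ℕ) :
    2 * sumMulSq m = ∑ v ∈ solutions m with v.2.2.1 = v.2.2.2, weight v -
      ∑ v ∈ solutions m with v.1 = v.2.1, weight v := by
  have split_vars := sum_eq_sum_filter_eq_add_two_nsmul swapTerms_involutive
    (swapTerms_mem_solutions m) (i := fun v => v.2.2.1) (j := fun v => v.2.2.2) (fun _ => rfl)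
    weight weight_swapTerms
  have split_coeffs := sum_eq_sum_filter_eq_add_two_nsmul swapTerms_involutive
    (swapTerms_mem_solutions m) (i := fun v => v.2.1) (j := fun v => v.1) (fun _ => rfl)
    weight weight_swapTerms
  have coeffs_eq_comm : ∑ v ∈ solutions m with v.2.1 = v.1, weight v =
      ∑ v ∈ solutions m with v.1 = v.2.1, weight v :=
    sum_congr (filter_congr fun _ _ => eq_comm) fun _ _ => rfl
  rw [two_nsmul] at split_vars split_coeffs
  rw [sumMulSq_eq_sub]
  linarith

theorem sum_filter_vars_eq {M : Type*} [AddCommMonoid M] (m : ℕ) (f : ℕ × ℕ × ℕ × ℕ → M) :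
    ∑ v ∈ solutions m with v.2.2.1 = v.2.2.2, f v =
      ∑ x ∈ m.divisors, ∑ a ∈ Ioo 0 (m / x), f (a, m / x - a, x, x) := by
  have left_inv : ∀ v ∈ (solutions m).filter fun v => v.2.2.1 = v.2.2.2,
      (v.1, m / v.2.2.1 - v.1, v.2.2.1, v.2.2.1) = v := by
    rintro ⟨a, b, x, y⟩ hv
    simp only [mem_filter, mem_solutions] at hv
    obtain ⟨⟨-, -, hx, -, rfl⟩, rfl⟩ := hv
    rw [← add_mul, Nat.mul_div_cancel _ hx, Nat.add_sub_cancel_left]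
  rw [sum_sigma']
  refine sum_nbij' (fun v => ⟨v.2.2.1, v.1⟩) (fun p => (p.2, m / p.1 - p.2, p.1, p.1))
    ?_ ?_ left_inv (fun _ _ => rfl) (fun v hv => congrArg f (left_inv v hv).symm)
  · rintro ⟨a, b, x, y⟩ hv
    simp only [mem_filter, mem_solutions] at hv
    obtain ⟨⟨ha, hb, hx, -, rfl⟩, rfl⟩ := hv
    have hq : (a * x + b * x) / x = a + b := by rw [← add_mul, Nat.mul_div_cancel _ hx]
    simp only [mem_sigma, Nat.mem_divisors, mem_Ioo, hq]
    exact ⟨⟨Dvd.intro_left _ (add_mul a b x), by positivity⟩, ha, by omega⟩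
  · rintro ⟨x, a⟩ hp
    simp only [mem_sigma, Nat.mem_divisors, mem_Ioo] at hp
    obtain ⟨⟨hdvd, hm⟩, ha, hlt⟩ := hp
    have hx : 0 < x := Nat.pos_of_dvd_of_pos hdvd (by omega)
    simp only [mem_filter, mem_solutions, and_true]
    refine ⟨ha, by omega, hx, hx, ?_⟩
    rw [← add_mul, Nat.add_sub_cancel' hlt.le, Nat.div_mul_cancel hdvd]

theorem cast_sigmaFn (k m : ℕ) : (sigmaFn k m : ℚ) = ∑ d ∈ m.divisors, (d : ℚ) ^ k := by
  simp [sigmaFn]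

theorem sum_weight_vars_eq (m : ℕ) :
    ∑ v ∈ solutions m with v.2.2.1 = v.2.2.2, weight v = sigmaFn 3 m - m * sigmaFn 2 m := by
  rw [sum_filter_vars_eq, cast_sigmaFn, cast_sigmaFn, mul_sum, ← sum_sub_distrib]
  refine sum_congr rfl fun x hx => ?_
  have hq : ((m / x : ℕ) : ℚ) * x = m := by
    exact_mod_cast Nat.div_mul_cancel (Nat.dvd_of_mem_divisors hx)
  have hpos : 1 ≤ m / x := Nat.div_pos (Nat.divisor_le hx) (Nat.pos_of_mem_divisors hx)
  simp only [weight, sum_const, Nat.card_Ioo, Nat.sub_zero, nsmul_eq_mul, Nat.cast_sub hpos]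
  linear_combination (-(x : ℚ) ^ 2) * hq

theorem sum_Ioo_mul_sub (N : ℕ) : ∑ a ∈ Ioo 0 N, (a : ℚ) * (N - a) = ((N : ℚ) ^ 3 - N) / 6 := by
  have range_sum (c : ℚ) (K : ℕ) :
      ∑ a ∈ range K, (a : ℚ) * (c - a) = c * K * (K - 1) / 2 - (K - 1) * K * (2 * K - 1) / 6 := by
    induction K with
    | zero => simp
    | succ K ih => rw [sum_range_succ, ih]; push_cast; ring
  rw [sum_subset (fun a ha => mem_range.2 (mem_Ioo.1 ha).2) fun a _ ha => ?_, range_sum]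
  · ring
  · simp [show a = 0 by simp_all]

theorem sum_weight_coeffs_eq (m : ℕ) :
    ∑ v ∈ solutions m with v.1 = v.2.1, weight v = -(sigmaFn 4 m - sigmaFn 2 m : ℚ) / 12 := by
  have inner (x N : ℕ) : ∑ a ∈ Ioo 0 N, weight (swapFactors (a, N - a, x, x)) =
      -((N : ℚ) ^ 4 - (N : ℚ) ^ 2) / 12 := by
    have h : ∀ a ∈ Ioo 0 N, weight (swapFactors (a, N - a, x, x)) = -(N / 2) * (a * (N - a)) :=
      fun a ha => by
        simp only [weight, swapFactors, Nat.cast_sub (mem_Ioo.1 ha).2.le]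
        ring
    rw [sum_congr rfl h, ← mul_sum, sum_Ioo_mul_sub]
    ring
  calc ∑ v ∈ solutions m with v.1 = v.2.1, weight v
      = ∑ x ∈ m.divisors, ∑ a ∈ Ioo 0 (m / x), weight (swapFactors (a, m / x - a, x, x)) :=
        (sum_filter_comp_of_involutive swapFactors_involutive
          (swapFactors_mem_solutions m) _ _).trans (sum_filter_vars_eq m _)
    _ = ∑ x ∈ m.divisors, -(((m / x : ℕ) : ℚ) ^ 4 - ((m / x : ℕ) : ℚ) ^ 2) / 12 :=
        sum_congr rfl fun x _ => inner x (m / x)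
    _ = ∑ d ∈ m.divisors, -((d : ℚ) ^ 4 - (d : ℚ) ^ 2) / 12 :=
        Nat.sum_div_divisors m fun d => -((d : ℚ) ^ 4 - (d : ℚ) ^ 2) / 12
    _ = -(sigmaFn 4 m - sigmaFn 2 m : ℚ) / 12 := by
        rw [cast_sigmaFn, cast_sigmaFn, ← sum_sub_distrib, ← sum_neg_distrib, sum_div]

theorem sumMulSq_eq_Ffn (m : ℕ) : sumMulSq m = Ffn m := by
  have h := two_mul_sumMulSq m
  rw [sum_weight_vars_eq, sum_weight_coeffs_eq] at h
  rw [Ffn]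
  linarith

theorem totient_div_eq_sum_moebius_div (g : ℕ) :
    (g.totient : ℚ) / g = ∑ d ∈ g.divisors, (ArithmeticFunction.moebius d : ℚ) / d := by
  rcases g.eq_zero_or_pos with rfl | hg
  · simp
  have inversion := (ArithmeticFunction.sum_eq_iff_sum_mul_moebius_eq (R := ℚ)
    (f := fun n => (n.totient : ℚ)) (g := fun n => (n : ℚ))).1
    (fun n _ => by exact_mod_cast Nat.sum_totient n) g hg
  rw [← inversion, sum_div,
    Nat.sum_divisorsAntidiagonal (fun d e => (ArithmeticFunction.moebius d : ℚ) * e / g)]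
  refine sum_congr rfl fun d hd => ?_
  have hd0 : (d : ℚ) ≠ 0 := by exact_mod_cast (Nat.pos_of_mem_divisors hd).ne'
  rw [Nat.cast_div (Nat.dvd_of_mem_divisors hd) hd0]
  field_simp

theorem sum_filter_dvd_eq_pow_mul_sumMulSq {d : ℕ} (hd : 0 < d) (m : ℕ) :
    ∑ v ∈ solutions (d * m) with v.2.2.2 < v.2.2.1 ∧ d ∣ v.2.2.1 ∧ d ∣ v.2.2.2,
      (v.2.2.1 : ℚ) * v.2.2.2 ^ 2 = d ^ 3 * sumMulSq m := by
  rw [sumMulSq, mul_sum]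
  symm
  refine sum_bij (fun w _ => (w.1, w.2.1, d * w.2.2.1, d * w.2.2.2)) ?_ ?_ ?_ ?_
  · rintro ⟨a, b, x, y⟩ hw
    simp only [mem_filter, mem_solutions] at hw ⊢
    obtain ⟨⟨ha, hb, hx, hy, rfl⟩, hlt⟩ := hw
    exact ⟨⟨ha, hb, by positivity, by positivity, by ring⟩, by gcongr, dvd_mul_right d x,
      dvd_mul_right d y⟩
  · rintro ⟨a, b, x, y⟩ - ⟨a', b', x', y'⟩ - h
    simp only [Prod.mk.injEq, mul_right_inj' hd.ne'] at h
    simp only [h]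
  · rintro ⟨a, b, x, y⟩ hv
    simp only [mem_filter, mem_solutions] at hv
    obtain ⟨⟨ha, hb, hx, hy, he⟩, hlt, ⟨x', rfl⟩, ⟨y', rfl⟩⟩ := hv
    refine ⟨(a, b, x', y'), ?_, rfl⟩
    simp only [mem_filter, mem_solutions]
    refine ⟨⟨ha, hb, pos_of_mul_pos_right hx hd.le, pos_of_mul_pos_right hy hd.le, ?_⟩,
      lt_of_mul_lt_mul_left hlt hd.le⟩
    apply mul_left_cancel₀ hd.ne'
    rw [← he]
    ring
  · intro w _
    push_cast
    ring

theorem mem_divisors_gcd_iff {n d : ℕ} {v : ℕ × ℕ × ℕ × ℕ} (hv : v ∈ solutions n) :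
    d ∈ (v.2.2.1.gcd v.2.2.2).divisors ↔ (d ∣ v.2.2.1 ∧ d ∣ v.2.2.2) ∧ d ∈ n.divisors := by
  obtain ⟨a, b, x, y⟩ := v
  obtain ⟨ha, -, hx, -, rfl⟩ := mem_solutions.1 hv
  simp only [Nat.mem_divisors, Nat.dvd_gcd_iff]
  constructor
  · rintro ⟨hd, -⟩
    exact ⟨hd, dvd_add (hd.1.mul_left a) (hd.2.mul_left b), by positivity⟩
  · rintro ⟨hd, -⟩
    exact ⟨hd, (Nat.gcd_pos_of_pos_left y hx).ne'⟩

theorem filter_solutions_lt (n : ℕ) :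
    (solutions n).filter (fun v => v.2.2.2 < v.2.2.1) =
      (Icc 1 n ×ˢ Icc 1 n ×ˢ Icc 1 n ×ˢ Icc 1 n).filter (fun v : ℕ × ℕ × ℕ × ℕ =>
        v.2.2.2 < v.2.2.1 ∧ v.1 * v.2.2.1 + v.2.1 * v.2.2.2 = n) := by
  rw [solutions, filter_filter]
  exact filter_congr fun _ _ => and_comm

end Liouville

open Liouville in
theorem sum_U_eq_general (n : ℕ) :
    (∑ v ∈ (Finset.Icc 1 n ×ˢ Finset.Icc 1 n ×ˢ Finset.Icc 1 n ×ˢ Finset.Icc 1 n).filter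
        (fun v : ℕ × ℕ × ℕ × ℕ => v.2.2.2 < v.2.2.1 ∧
          v.1 * v.2.2.1 + v.2.1 * v.2.2.2 = n),
      (v.2.2.1 * v.2.2.2 ^ 2 * Nat.totient (Nat.gcd v.2.2.1 v.2.2.2) : ℚ) /
        (Nat.gcd v.2.2.1 v.2.2.2 : ℚ))
    = ∑ d ∈ n.divisors, (ArithmeticFunction.moebius d : ℚ) * (d : ℚ) ^ 2 * Ffn (n / d) := by
  rw [← filter_solutions_lt]
  calc _ = ∑ v ∈ solutions n with v.2.2.2 < v.2.2.1, ∑ d ∈ (v.2.2.1.gcd v.2.2.2).divisors,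
          (ArithmeticFunction.moebius d : ℚ) / d * (v.2.2.1 * v.2.2.2 ^ 2) :=
        sum_congr rfl fun v _ => by
          rw [mul_div_assoc, totient_div_eq_sum_moebius_div, mul_comm, sum_mul]
    _ = ∑ d ∈ n.divisors, ∑ v ∈ solutions n with v.2.2.2 < v.2.2.1 ∧ d ∣ v.2.2.1 ∧ d ∣ v.2.2.2,
          (ArithmeticFunction.moebius d : ℚ) / d * (v.2.2.1 * v.2.2.2 ^ 2) := by
        refine sum_comm' fun v d => ?_
        simp only [mem_filter]
        by_cases hv : v ∈ solutions n
        · rw [mem_divisors_gcd_iff hv]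
          tauto
        · simp [hv]
    _ = _ := sum_congr rfl fun d hd => by
        obtain ⟨m, rfl⟩ := Nat.dvd_of_mem_divisors hd
        have hd0 := Nat.pos_of_mem_divisors hd
        rw [← mul_sum, sum_filter_dvd_eq_pow_mul_sumMulSq hd0, Nat.mul_div_cancel_left m hd0,
          sumMulSq_eq_Ffn]
        field_simp

theorem sum_U_eq (n : ℕ) (hn : 0 < n) :
    (∑ v ∈ (Finset.Icc 1 n ×ˢ Finset.Icc 1 n ×ˢ Finset.Icc 1 n ×ˢ Finset.Icc 1 n).filter
        (fun v : ℕ × ℕ × ℕ × ℕ => v.2.2.2 < v.2.2.1 ∧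
          v.1 * v.2.2.1 + v.2.1 * v.2.2.2 = n),
      (v.2.2.1 * v.2.2.2 ^ 2 * Nat.totient (Nat.gcd v.2.2.1 v.2.2.2) : ℚ) /
        (Nat.gcd v.2.2.1 v.2.2.2 : ℚ))
    = ∑ d ∈ n.divisors, (ArithmeticFunction.moebius d : ℚ) * (d : ℚ) ^ 2 * Ffn (n / d) :=
  sum_U_eq_general n
end

section
/- For every positive integer n, the sum of k·l·φ(gcd(k, l))/gcd(k, l) over all quadruples (p, q, k, l) of positive integers with p·k + q·l = n equals ∑_{d ∣ n} μ(d)·d·G(n/d), where G(m) = (5/12)·σ₃(m) + (1/12)·σ₁(m) − (1/2)·m·σ₁(m). -/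
/-- `G(m) = (5/12)σ₃(m) + (1/12)σ₁(m) − (1/2)mσ₁(m)`. -/
def Gfn (m : ℕ) : ℚ :=
  (5 / 12) * sigmaFn 3 m + (1 / 12) * sigmaFn 1 m - (1 / 2) * (m : ℚ) * sigmaFn 1 m

/-!
Since `φ(g) / g = ∑_{e ∣ g} μ(e) / e`, pulling a common divisor `e` of `k` and `l` out of
`p k + q l = n` turns the sum into `∑_{e ∣ n} μ(e) e S(n / e)`, where
`S(m) = ∑_{p k + q l = m} k l`. That `S = G` is Besge's identity, which has an elementary
bijective proof: the swap `(p, q, k, l) ↦ (q, p, l, k)` and the shear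
`(p, q, k, l) ↦ (p, q - p, k + l, l)`, a bijection from `{p < q}` onto `{l < k}`, match up the
sums of `k l`, `k²` and `l²` off the diagonals `p = q` and `k = l`, so that `2 S(m)` becomes a
sum over these diagonals, which are divisor sums.
-/

open Finset

lemma Finset.sum_comp_of_involutive {α M : Type*} [AddCommMonoid M] {s : Finset α}
    {σ : α → α} (hσ : Function.Involutive σ) (hs : ∀ v ∈ s, σ v ∈ s) (f : α → M) :
    ∑ v ∈ s, f (σ v) = ∑ v ∈ s, f v :=
  sum_nbij' σ σ hs hs (fun v _ => hσ v) (fun v _ => hσ v) (fun _ _ => rfl)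

lemma Finset.sum_eq_sum_filter_lt_add_sum_filter_eq_add_sum_filter_gt {α β M : Type*}
    [LinearOrder β] [AddCommMonoid M] (s : Finset α) (p q : α → β) (f : α → M) :
    ∑ v ∈ s, f v
      = ∑ v ∈ s with p v < q v, f v + ∑ v ∈ s with p v = q v, f v
        + ∑ v ∈ s with q v < p v, f v := by
  simp only [sum_filter, ← sum_add_distrib]
  refine sum_congr rfl fun v _ => ?_
  rcases lt_trichotomy (p v) (q v) with h | h | h
  · simp [h, h.ne, h.not_gt]
  · simp [h]
  · simp [h, h.ne', h.not_gt]

lemma Finset.sum_Ioo_zero_eq_sum_range {M : Type*} [AddCommMonoid M] {g : ℕ → M} (hg : g 0 = 0)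
    (d : ℕ) : ∑ a ∈ Ioo 0 d, g a = ∑ a ∈ range d, g a := by
  rcases d.eq_zero_or_pos with rfl | hd
  · simp
  · rw [range_eq_Ico, ← Ioo_insert_left hd, sum_insert left_notMem_Ioo, hg, zero_add]

lemma sum_range_sq_add_mul (c : ℚ) (d : ℕ) :
    ∑ a ∈ range d, ((a : ℚ) ^ 2 + a * c) = d * (d - 1) * (2 * d - 1) / 6 + c * d * (d - 1) / 2 := by
  induction d with
  | zero => simp
  | succ d ih => rw [sum_range_succ, ih]; push_cast; ring

open ArithmeticFunction ArithmeticFunction.Moebius in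
lemma Nat.totient_div_self_eq_sum_moebius_div {m : ℕ} (hm : m ≠ 0) :
    (m.totient : ℚ) / m = ∑ e ∈ m.divisors, (μ e : ℚ) / e := by
  have h := (sum_eq_iff_sum_mul_moebius_eq (f := fun k => (k.totient : ℚ))
    (g := fun k => (k : ℚ))).mp (fun k _ => by exact_mod_cast Nat.sum_totient k) m
    (Nat.pos_of_ne_zero hm)
  rw [← h, sum_div, ← Nat.sum_divisorsAntidiagonal (fun d _ => (μ d : ℚ) / d)]
  refine sum_congr rfl fun ⟨d, e⟩ hp => ?_
  obtain ⟨rfl, hde⟩ := Nat.mem_divisorsAntidiagonal.mp hp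
  have hd : (d : ℚ) ≠ 0 := by exact_mod_cast left_ne_zero_of_mul hde
  have he : (e : ℚ) ≠ 0 := by exact_mod_cast right_ne_zero_of_mul hde
  push_cast
  field_simp

def reps (n : ℕ) : Finset (ℕ × ℕ × ℕ × ℕ) :=
  (Icc 1 n ×ˢ Icc 1 n ×ˢ Icc 1 n ×ˢ Icc 1 n).filter
    (fun v : ℕ × ℕ × ℕ × ℕ => v.1 * v.2.2.1 + v.2.1 * v.2.2.2 = n)

@[simp]
lemma mem_reps {n : ℕ} {v : ℕ × ℕ × ℕ × ℕ} :
    v ∈ reps n ↔ 0 < v.1 ∧ 0 < v.2.1 ∧ 0 < v.2.2.1 ∧ 0 < v.2.2.2 ∧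
      v.1 * v.2.2.1 + v.2.1 * v.2.2.2 = n := by
  obtain ⟨p, q, k, l⟩ := v
  simp only [reps, mem_filter, mem_product, mem_Icc]
  constructor
  · rintro ⟨⟨⟨hp, -⟩, ⟨hq, -⟩, ⟨hk, -⟩, hl, -⟩, h⟩
    exact ⟨hp, hq, hk, hl, h⟩
  · rintro ⟨hp, hq, hk, hl, rfl⟩
    have := Nat.le_mul_of_pos_right p hk
    have := Nat.le_mul_of_pos_right q hl
    have := Nat.le_mul_of_pos_left k hp
    have := Nat.le_mul_of_pos_left l hq
    omega

section

variable {M : Type*} [AddCommMonoid M] (n : ℕ)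

lemma sum_reps_swap (P : ℕ × ℕ × ℕ × ℕ → Prop) [DecidablePred P] (f : ℕ × ℕ × ℕ × ℕ → M) :
    ∑ v ∈ reps n with P v, f v
      = ∑ v ∈ reps n with P (v.2.1, v.1, v.2.2.2, v.2.2.1), f (v.2.1, v.1, v.2.2.2, v.2.2.1) := by
  simp only [sum_filter]
  refine (sum_comp_of_involutive (fun _ => rfl) (fun v hv => ?_) _).symm
  simp only [mem_reps] at hv ⊢
  omega

lemma sum_reps_transpose (P : ℕ × ℕ × ℕ × ℕ → Prop) [DecidablePred P] (f : ℕ × ℕ × ℕ × ℕ → M) :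
    ∑ v ∈ reps n with P v, f v
      = ∑ v ∈ reps n with P (v.2.2.1, v.2.2.2, v.1, v.2.1), f (v.2.2.1, v.2.2.2, v.1, v.2.1) := by
  simp only [sum_filter]
  refine (sum_comp_of_involutive (fun _ => rfl) (fun v hv => ?_) _).symm
  simp only [mem_reps] at hv ⊢
  refine ⟨hv.2.2.1, hv.2.2.2.1, hv.1, hv.2.1, ?_⟩
  rw [← hv.2.2.2.2]; ring

lemma sum_reps_shear (f : ℕ × ℕ × ℕ × ℕ → M) :
    ∑ v ∈ reps n with v.1 < v.2.1, f (v.1, v.2.1 - v.1, v.2.2.1 + v.2.2.2, v.2.2.2)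
      = ∑ v ∈ reps n with v.2.2.2 < v.2.2.1, f v := by
  refine sum_nbij' (fun v => (v.1, v.2.1 - v.1, v.2.2.1 + v.2.2.2, v.2.2.2))
    (fun v => (v.1, v.1 + v.2.1, v.2.2.1 - v.2.2.2, v.2.2.2)) ?_ ?_ ?_ ?_ (fun _ _ => rfl)
  · rintro ⟨p, q, k, l⟩ hv
    simp only [mem_filter, mem_reps] at hv ⊢
    obtain ⟨⟨hp, hq, hk, hl, rfl⟩, hpq⟩ := hv
    obtain ⟨t, rfl⟩ := Nat.exists_eq_add_of_lt hpq
    refine ⟨⟨hp, by omega, by omega, hl, ?_⟩, by omega⟩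
    rw [show p + t + 1 - p = t + 1 by omega]; ring
  · rintro ⟨p, q, k, l⟩ hv
    simp only [mem_filter, mem_reps] at hv ⊢
    obtain ⟨⟨hp, hq, hk, hl, rfl⟩, hlk⟩ := hv
    obtain ⟨t, rfl⟩ := Nat.exists_eq_add_of_lt hlk
    refine ⟨⟨hp, by omega, by omega, hl, ?_⟩, by omega⟩
    rw [show l + t + 1 - l = t + 1 by omega]; ring
  all_goals
    rintro ⟨p, q, k, l⟩ hv
    simp only [mem_filter, Prod.mk.injEq, true_and, and_true] at hv ⊢
    omega

lemma sum_reps_diag_kl (f : ℕ × ℕ × ℕ × ℕ → M) :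
    ∑ v ∈ reps n with v.2.2.1 = v.2.2.2, f v
      = ∑ de ∈ n.divisorsAntidiagonal, ∑ p ∈ Ioo 0 de.1, f (p, de.1 - p, de.2, de.2) := by
  rw [sum_sigma']
  symm
  refine sum_nbij' (fun q => (q.2, q.1.1 - q.2, q.1.2, q.1.2))
    (fun v => ⟨(v.1 + v.2.1, v.2.2.1), v.1⟩) ?_ ?_ ?_ ?_ (fun _ _ => rfl)
  · rintro ⟨⟨d, e⟩, p⟩ hmem
    simp only [mem_sigma, Nat.mem_divisorsAntidiagonal, mem_Ioo] at hmem
    obtain ⟨⟨rfl, hde⟩, hp, hpd⟩ := hmem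
    simp only [mem_filter, mem_reps, and_true]
    have he : 0 < e := Nat.pos_of_ne_zero (right_ne_zero_of_mul hde)
    refine ⟨hp, by omega, he, he, ?_⟩
    rw [← add_mul, Nat.add_sub_cancel' hpd.le]
  · rintro ⟨p, q, k, l⟩ hv
    simp only [mem_filter, mem_reps] at hv
    obtain ⟨⟨hp, hq, hk, hl, rfl⟩, rfl⟩ := hv
    simp only [mem_sigma, Nat.mem_divisorsAntidiagonal, mem_Ioo]
    refine ⟨⟨by ring, by positivity⟩, hp, by omega⟩
  · rintro ⟨⟨d, e⟩, p⟩ hmem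
    simp only [mem_sigma, mem_Ioo] at hmem
    simp only [Sigma.mk.injEq, Prod.mk.injEq, heq_eq_eq, and_true]
    omega
  · rintro ⟨p, q, k, l⟩ hv
    simp only [mem_filter] at hv
    simp only [Prod.mk.injEq, true_and]
    omega

lemma sum_reps_filter_dvd (f : ℕ × ℕ × ℕ × ℕ → M) {e : ℕ} (he : 0 < e) (m : ℕ) :
    ∑ v ∈ reps (e * m) with e ∣ v.2.2.1 ∧ e ∣ v.2.2.2, f v
      = ∑ w ∈ reps m, f (w.1, w.2.1, e * w.2.2.1, e * w.2.2.2) := by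
  symm
  refine sum_nbij (fun w => (w.1, w.2.1, e * w.2.2.1, e * w.2.2.2)) ?_ ?_ ?_ (fun _ _ => rfl)
  · rintro ⟨p, q, k, l⟩ hw
    simp only [mem_reps] at hw
    obtain ⟨hp, hq, hk, hl, rfl⟩ := hw
    simp only [mem_filter, mem_reps, dvd_mul_right, and_true]
    exact ⟨hp, hq, by positivity, by positivity, by ring⟩
  · rintro ⟨p, q, k, l⟩ - ⟨p', q', k', l'⟩ - h
    simp only [Prod.mk.injEq, Nat.mul_left_cancel_iff he] at h
    simp only [h]
  · rintro ⟨p, q, k, l⟩ hv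
    simp only [coe_filter, Set.mem_ofPred_eq, mem_reps] at hv
    obtain ⟨⟨hp, hq, hk, hl, hsum⟩, ⟨k', rfl⟩, ⟨l', rfl⟩⟩ := hv
    refine ⟨(p, q, k', l'), ?_, rfl⟩
    simp only [mem_coe, mem_reps]
    refine ⟨hp, hq, Nat.pos_of_mul_pos_left hk, Nat.pos_of_mul_pos_left hl, ?_⟩
    apply Nat.eq_of_mul_eq_mul_left he
    rw [← hsum]; ring

lemma sum_reps_sum_divisors_gcd (f : ℕ → ℕ × ℕ × ℕ × ℕ → M) :
    ∑ v ∈ reps n, ∑ e ∈ (Nat.gcd v.2.2.1 v.2.2.2).divisors, f e v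
      = ∑ e ∈ n.divisors, ∑ w ∈ reps (n / e), f e (w.1, w.2.1, e * w.2.2.1, e * w.2.2.2) := by
  rw [sum_comm' (t' := n.divisors)
    (s' := fun e => (reps n).filter (fun v => e ∣ v.2.2.1 ∧ e ∣ v.2.2.2))]
  · refine sum_congr rfl fun e he => ?_
    obtain ⟨hen, hn⟩ := Nat.mem_divisors.mp he
    have := sum_reps_filter_dvd (f e) (Nat.pos_of_dvd_of_pos hen (Nat.pos_of_ne_zero hn)) (n / e)
    rwa [Nat.mul_div_cancel' hen] at this
  · rintro ⟨p, q, k, l⟩ e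
    simp only [mem_reps, mem_filter, Nat.mem_divisors, Nat.dvd_gcd_iff]
    constructor
    · rintro ⟨⟨hp, hq, hk, hl, rfl⟩, ⟨hek, hel⟩, -⟩
      refine ⟨⟨⟨hp, hq, hk, hl, rfl⟩, hek, hel⟩, dvd_add (hek.mul_left p) (hel.mul_left q), ?_⟩
      positivity
    · rintro ⟨⟨⟨hp, hq, hk, hl, rfl⟩, hek, hel⟩, -⟩
      exact ⟨⟨hp, hq, hk, hl, rfl⟩, ⟨hek, hel⟩, (Nat.gcd_pos_of_pos_left l hk).ne'⟩

end

lemma two_mul_sum_reps_mul (n : ℕ) :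
    2 * ∑ v ∈ reps n, (v.2.2.1 * v.2.2.2 : ℚ)
      = ∑ v ∈ reps n with v.1 = v.2.1, (2 * (v.2.2.1 : ℚ) ^ 2 + v.2.2.1 * v.2.2.2)
        - ∑ v ∈ reps n with v.2.2.1 = v.2.2.2, (v.2.2.1 : ℚ) ^ 2 := by
  set A := ∑ v ∈ reps n with v.1 < v.2.1, (v.2.2.1 : ℚ) ^ 2
  set B := ∑ v ∈ reps n with v.1 < v.2.1, (v.2.2.1 * v.2.2.2 : ℚ)
  set C := ∑ v ∈ reps n with v.1 < v.2.1, (v.2.2.2 : ℚ) ^ 2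
  have swap_kl : ∑ v ∈ reps n with v.2.2.1 < v.2.2.2, (v.2.2.1 * v.2.2.2 : ℚ)
      = ∑ v ∈ reps n with v.2.2.2 < v.2.2.1, (v.2.2.1 * v.2.2.2 : ℚ) :=
    (sum_reps_swap n _ _).trans (sum_congr rfl fun _ _ => mul_comm _ _)
  have shear_kl : ∑ v ∈ reps n with v.2.2.2 < v.2.2.1, (v.2.2.1 * v.2.2.2 : ℚ) = B + C := by
    rw [← sum_reps_shear, ← sum_add_distrib]
    refine sum_congr rfl fun _ _ => ?_
    push_cast; ring
  have swap_pq : ∑ v ∈ reps n with v.2.1 < v.1, (v.2.2.1 * v.2.2.2 : ℚ) = B :=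
    (sum_reps_swap n _ _).trans (sum_congr rfl fun _ _ => mul_comm _ _)
  have swap_shear_sq : ∑ v ∈ reps n with v.2.2.1 < v.2.2.2, (v.2.2.1 : ℚ) ^ 2 = C :=
    (sum_reps_swap n _ _).trans (sum_reps_shear n _).symm
  have shear_sq : ∑ v ∈ reps n with v.2.2.2 < v.2.2.1, (v.2.2.1 : ℚ) ^ 2 = A + 2 * B + C := by
    rw [← sum_reps_shear, mul_sum, ← sum_add_distrib, ← sum_add_distrib]
    refine sum_congr rfl fun _ _ => ?_
    push_cast; ring
  have swap_sq : ∑ v ∈ reps n with v.2.1 < v.1, (v.2.2.1 : ℚ) ^ 2 = C := sum_reps_swap n _ _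
  have diag : ∑ v ∈ reps n with v.2.2.1 = v.2.2.2, (v.2.2.1 * v.2.2.2 : ℚ)
      = ∑ v ∈ reps n with v.2.2.1 = v.2.2.2, (v.2.2.1 : ℚ) ^ 2 :=
    sum_congr rfl fun v hv => by rw [(mem_filter.mp hv).2, sq]
  have split_kl := sum_eq_sum_filter_lt_add_sum_filter_eq_add_sum_filter_gt (reps n)
    (fun v => v.2.2.1) (fun v => v.2.2.2) (fun v => (v.2.2.1 * v.2.2.2 : ℚ))
  have split_pq := sum_eq_sum_filter_lt_add_sum_filter_eq_add_sum_filter_gt (reps n)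
    (fun v => v.1) (fun v => v.2.1) (fun v => (v.2.2.1 * v.2.2.2 : ℚ))
  have split_sq_kl := sum_eq_sum_filter_lt_add_sum_filter_eq_add_sum_filter_gt (reps n)
    (fun v => v.2.2.1) (fun v => v.2.2.2) (fun v => (v.2.2.1 : ℚ) ^ 2)
  have split_sq_pq := sum_eq_sum_filter_lt_add_sum_filter_eq_add_sum_filter_gt (reps n)
    (fun v => v.1) (fun v => v.2.1) (fun v => (v.2.2.1 : ℚ) ^ 2)
  rw [sum_add_distrib, ← mul_sum]
  linarith

lemma sum_reps_diag_pq (n : ℕ) :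
    ∑ v ∈ reps n with v.1 = v.2.1, (2 * (v.2.2.1 : ℚ) ^ 2 + v.2.2.1 * v.2.2.2)
      = ∑ d ∈ n.divisors, (d : ℚ) * (d - 1) * (5 * d - 1) / 6 := by
  rw [sum_reps_transpose, sum_reps_diag_kl, Nat.sum_divisorsAntidiagonal
    (fun d _ => ∑ a ∈ Ioo 0 d, (2 * (a : ℚ) ^ 2 + a * ((d - a : ℕ) : ℚ)))]
  refine sum_congr rfl fun d _ => ?_
  calc ∑ a ∈ Ioo 0 d, (2 * (a : ℚ) ^ 2 + a * ((d - a : ℕ) : ℚ))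
      = ∑ a ∈ range d, ((a : ℚ) ^ 2 + a * d) := by
        rw [sum_Ioo_zero_eq_sum_range (by simp)]
        refine sum_congr rfl fun a ha => ?_
        rw [Nat.cast_sub (mem_range.mp ha).le]
        ring
    _ = (d : ℚ) * (d - 1) * (5 * d - 1) / 6 := by rw [sum_range_sq_add_mul]; ring

lemma sum_reps_diag_kl_sq (n : ℕ) :
    ∑ v ∈ reps n with v.2.2.1 = v.2.2.2, (v.2.2.1 : ℚ) ^ 2
      = ∑ d ∈ n.divisors, ((n : ℚ) * d - d ^ 2) := by
  rw [sum_reps_diag_kl, ← Nat.sum_divisorsAntidiagonal' (fun _ e => ((n : ℚ) * e - e ^ 2))]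
  refine sum_congr rfl fun ⟨d, e⟩ hp => ?_
  obtain ⟨rfl, hn⟩ := Nat.mem_divisorsAntidiagonal.mp hp
  have hd : 1 ≤ d := Nat.one_le_iff_ne_zero.mpr (left_ne_zero_of_mul hn)
  dsimp only
  rw [sum_const, Nat.card_Ioo, Nat.sub_zero, nsmul_eq_mul, Nat.cast_sub hd]
  push_cast; ring

theorem sum_reps_mul_eq_Gfn (n : ℕ) : ∑ v ∈ reps n, (v.2.2.1 * v.2.2.2 : ℚ) = Gfn n := by
  have h := two_mul_sum_reps_mul n
  rw [sum_reps_diag_pq, sum_reps_diag_kl_sq, ← sum_sub_distrib] at h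
  calc ∑ v ∈ reps n, (v.2.2.1 * v.2.2.2 : ℚ)
      = (∑ d ∈ n.divisors, ((d : ℚ) * (d - 1) * (5 * d - 1) / 6 - (n * d - d ^ 2))) / 2 := by
        linarith
    _ = Gfn n := by
        simp only [Gfn, sigmaFn, Nat.cast_sum, Nat.cast_pow, mul_sum, ← sum_add_distrib,
          ← sum_sub_distrib, sum_div]
        exact sum_congr rfl fun _ _ => by ring

theorem sum_V_eq_general (n : ℕ) :
    (∑ v ∈ (Finset.Icc 1 n ×ˢ Finset.Icc 1 n ×ˢ Finset.Icc 1 n ×ˢ Finset.Icc 1 n).filter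
        (fun v : ℕ × ℕ × ℕ × ℕ => v.1 * v.2.2.1 + v.2.1 * v.2.2.2 = n),
      (v.2.2.1 * v.2.2.2 * Nat.totient (Nat.gcd v.2.2.1 v.2.2.2) : ℚ) /
        (Nat.gcd v.2.2.1 v.2.2.2 : ℚ))
    = ∑ d ∈ n.divisors, (ArithmeticFunction.moebius d : ℚ) * (d : ℚ) * Gfn (n / d) := by
  change ∑ v ∈ reps n, _ = _
  calc _ = ∑ v ∈ reps n, ∑ e ∈ (Nat.gcd v.2.2.1 v.2.2.2).divisors,
        (ArithmeticFunction.moebius e : ℚ) * (v.2.2.1 * v.2.2.2 / e) := by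
        refine sum_congr rfl fun v hv => ?_
        rw [mul_div_assoc, Nat.totient_div_self_eq_sum_moebius_div
          (Nat.gcd_pos_of_pos_left _ (mem_reps.mp hv).2.2.1).ne', mul_sum]
        exact sum_congr rfl fun _ _ => by ring
    _ = ∑ e ∈ n.divisors, (ArithmeticFunction.moebius e : ℚ) * e *
          ∑ w ∈ reps (n / e), (w.2.2.1 * w.2.2.2 : ℚ) := by
        rw [sum_reps_sum_divisors_gcd]
        refine sum_congr rfl fun e he => ?_
        have he0 : (e : ℚ) ≠ 0 := by exact_mod_cast (Nat.pos_of_mem_divisors he).ne'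
        rw [mul_sum]
        refine sum_congr rfl fun _ _ => ?_
        push_cast
        field_simp
    _ = _ := by simp only [sum_reps_mul_eq_Gfn]

theorem sum_V_eq (n : ℕ) (hn : 0 < n) :
    (∑ v ∈ (Finset.Icc 1 n ×ˢ Finset.Icc 1 n ×ˢ Finset.Icc 1 n ×ˢ Finset.Icc 1 n).filter
        (fun v : ℕ × ℕ × ℕ × ℕ => v.1 * v.2.2.1 + v.2.1 * v.2.2.2 = n),
      (v.2.2.1 * v.2.2.2 * Nat.totient (Nat.gcd v.2.2.1 v.2.2.2) : ℚ) /
        (Nat.gcd v.2.2.1 v.2.2.2 : ℚ))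
    = ∑ d ∈ n.divisors, (ArithmeticFunction.moebius d : ℚ) * (d : ℚ) * Gfn (n / d) :=
  sum_V_eq_general n
end

section
/- For every positive integer n, the sum of q·k·l·(k + l) over all quadruples (p, q, k, l) of positive integers with p·k + q·(k + l) = n equals (1/12)·n·σ₃(n) + (1/12)·n·σ₁(n) − (1/6)·n²·σ₁(n). -/
/-!
Substituting `a = p + q`, `b = q`, `x = k`, `y = l` turns the sum into the sum `S` of
`b x y (x + y)` over the positive solutions of `a x + b y = n` with `b < a`. Liouville's method
evaluates such sums with the symmetries `(a, b, x, y) ↦ (b, a, y, x)` and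
`(a, b, x, y) ↦ (x, y, a, b)` of the solution set, the bijection
`(a, b, x, y) ↦ (a + b, b, x, y - x)` from its part with `x < y` onto its part with `b < a`, and
the parametrisation of the diagonals `a = b` and `x = y` by the divisors of `n`. Applied to the
weights `b x y (x ± y)` this gives `3 S = n ∑ x y - n (σ₃ - σ₁) / 6`, and applied to `(a - b)²`,
`(a + b)²` and `a²` it gives Besge's formula
`∑ x y = ∑_{m < n} σ(m) σ(n - m) = (5 σ₃ + σ₁ - 6 n σ₁) / 12`.
-/

open Finset

namespace LiouvilleMethod

variable {n : ℕ}

def solutions (n : ℕ) : Finset (ℕ × ℕ × ℕ × ℕ) :=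
  (Icc 1 n ×ˢ Icc 1 n ×ˢ Icc 1 n ×ˢ Icc 1 n).filter fun v => v.1 * v.2.2.1 + v.2.1 * v.2.2.2 = n

theorem mem_solutions {a b x y : ℕ} :
    (a, b, x, y) ∈ solutions n ↔ 0 < a ∧ 0 < b ∧ 0 < x ∧ 0 < y ∧ a * x + b * y = n := by
  simp only [solutions, mem_filter, mem_product, mem_Icc]
  constructor
  · rintro ⟨⟨⟨ha, -⟩, ⟨hb, -⟩, ⟨hx, -⟩, ⟨hy, -⟩⟩, h⟩
    exact ⟨ha, hb, hx, hy, h⟩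
  · rintro ⟨ha, hb, hx, hy, rfl⟩
    refine ⟨⟨⟨ha, ?_⟩, ⟨hb, ?_⟩, ⟨hx, ?_⟩, ⟨hy, ?_⟩⟩, rfl⟩ <;> nlinarith

def solSum (n : ℕ) (F : ℕ → ℕ → ℕ → ℕ → ℚ) : ℚ :=
  ∑ v ∈ solutions n, F v.1 v.2.1 v.2.2.1 v.2.2.2

theorem solSum_congr {F G : ℕ → ℕ → ℕ → ℕ → ℚ}
    (h : ∀ a b x y, a * x + b * y = n → F a b x y = G a b x y) : solSum n F = solSum n G :=
  sum_congr rfl fun ⟨_, _, _, _⟩ hv => h _ _ _ _ (mem_solutions.1 hv).2.2.2.2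

theorem solSum_add (F G : ℕ → ℕ → ℕ → ℕ → ℚ) :
    solSum n (fun a b x y => F a b x y + G a b x y) = solSum n F + solSum n G :=
  sum_add_distrib

theorem solSum_sub (F G : ℕ → ℕ → ℕ → ℕ → ℚ) :
    solSum n (fun a b x y => F a b x y - G a b x y) = solSum n F - solSum n G :=
  sum_sub_distrib _ _

theorem solSum_const_mul (c : ℚ) (F : ℕ → ℕ → ℕ → ℕ → ℚ) :
    solSum n (fun a b x y => c * F a b x y) = c * solSum n F :=
  (mul_sum ..).symm

theorem solSum_eq_zero {F : ℕ → ℕ → ℕ → ℕ → ℚ}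
    (h : ∀ a b x y, a * x + b * y = n → F a b x y = 0) : solSum n F = 0 :=
  (solSum_congr h).trans sum_const_zero

theorem solSum_swap (F : ℕ → ℕ → ℕ → ℕ → ℚ) :
    solSum n F = solSum n fun a b x y => F b a y x := by
  refine sum_nbij' (fun v => (v.2.1, v.1, v.2.2.2, v.2.2.1))
    (fun v => (v.2.1, v.1, v.2.2.2, v.2.2.1)) ?_ ?_
    (fun _ _ => rfl) (fun _ _ => rfl) (fun _ _ => rfl) <;>
  · rintro ⟨a, b, x, y⟩ hv
    obtain ⟨ha, hb, hx, hy, h⟩ := mem_solutions.1 hv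
    exact mem_solutions.2 ⟨hb, ha, hy, hx, by rw [← h, add_comm]⟩

theorem solSum_transpose (F : ℕ → ℕ → ℕ → ℕ → ℚ) :
    solSum n F = solSum n fun a b x y => F x y a b := by
  refine sum_nbij' (fun v => (v.2.2.1, v.2.2.2, v.1, v.2.1))
    (fun v => (v.2.2.1, v.2.2.2, v.1, v.2.1)) ?_ ?_
    (fun _ _ => rfl) (fun _ _ => rfl) (fun _ _ => rfl) <;>
  · rintro ⟨a, b, x, y⟩ hv
    obtain ⟨ha, hb, hx, hy, h⟩ := mem_solutions.1 hv
    exact mem_solutions.2 ⟨hx, hy, ha, hb, by rw [← h, mul_comm x, mul_comm y]⟩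

theorem solSum_ite_lt_xy (F : ℕ → ℕ → ℕ → ℕ → ℚ) :
    solSum n (fun a b x y => if x < y then F a b x y else 0) =
      solSum n (fun a b x y => if b < a then F (a - b) b x (x + y) else 0) := by
  simp only [solSum, ← sum_filter]
  refine sum_nbij' (fun v => (v.1 + v.2.1, v.2.1, v.2.2.1, v.2.2.2 - v.2.2.1))
    (fun v => (v.1 - v.2.1, v.2.1, v.2.2.1, v.2.2.1 + v.2.2.2)) ?_ ?_ ?_ ?_ ?_
  · rintro ⟨a, b, x, y⟩ hv
    simp only [mem_filter, mem_solutions] at hv ⊢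
    obtain ⟨⟨ha, hb, hx, hy, h⟩, hxy⟩ := hv
    obtain ⟨c, rfl⟩ := Nat.exists_eq_add_of_lt hxy
    refine ⟨⟨by omega, hb, hx, by omega, ?_⟩, by omega⟩
    rw [← h, show x + c + 1 - x = c + 1 by omega]; ring
  · rintro ⟨a, b, x, y⟩ hv
    simp only [mem_filter, mem_solutions] at hv ⊢
    obtain ⟨⟨ha, hb, hx, hy, h⟩, hba⟩ := hv
    obtain ⟨c, rfl⟩ := Nat.exists_eq_add_of_lt hba
    refine ⟨⟨by omega, hb, hx, by omega, ?_⟩, by omega⟩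
    rw [← h, show b + c + 1 - b = c + 1 by omega]; ring
  · rintro ⟨a, b, x, y⟩ hv
    have hxy : x < y := (mem_filter.1 hv).2
    simp only [Prod.mk.injEq, true_and]
    omega
  · rintro ⟨a, b, x, y⟩ hv
    have hba : b < a := (mem_filter.1 hv).2
    simp only [Prod.mk.injEq, true_and]
    omega
  · rintro ⟨a, b, x, y⟩ hv
    have hxy : x < y := (mem_filter.1 hv).2
    simp only [Nat.add_sub_cancel, Nat.add_sub_cancel' hxy.le]

theorem solSum_split_ab (F : ℕ → ℕ → ℕ → ℕ → ℚ) :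
    solSum n F = solSum n (fun a b x y => if a = b then F a b x y else 0) +
      solSum n (fun a b x y => if b < a then F a b x y + F b a y x else 0) := by
  have hsplit : solSum n F = solSum n (fun a b x y => if a = b then F a b x y else 0) +
      solSum n (fun a b x y => if b < a then F a b x y else 0) +
      solSum n (fun a b x y => if a < b then F a b x y else 0) := by
    rw [← solSum_add, ← solSum_add]
    exact solSum_congr fun a b x y _ => by split_ifs <;> first | omega | ring
  rw [hsplit, solSum_swap (fun a b x y => if a < b then F a b x y else 0), add_assoc,
    ← solSum_add]
  congr 2
  ext a b x y
  split_ifs <;> simp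

theorem solSum_split_xy (F : ℕ → ℕ → ℕ → ℕ → ℚ) :
    solSum n F = solSum n (fun a b x y => if x = y then F a b x y else 0) +
      solSum n (fun a b x y => if x < y then F a b x y + F b a y x else 0) := by
  have hsplit : solSum n F = solSum n (fun a b x y => if x = y then F a b x y else 0) +
      solSum n (fun a b x y => if x < y then F a b x y else 0) +
      solSum n (fun a b x y => if y < x then F a b x y else 0) := by
    rw [← solSum_add, ← solSum_add]
    exact solSum_congr fun a b x y _ => by split_ifs <;> first | omega | ring
  rw [hsplit, solSum_swap (fun a b x y => if y < x then F a b x y else 0), add_assoc,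
    ← solSum_add]
  congr 2
  ext a b x y
  split_ifs <;> simp

theorem solSum_ite_eq_ab (F : ℕ → ℕ → ℕ → ℕ → ℚ) :
    solSum n (fun a b x y => if a = b then F a b x y else 0) =
      ∑ p ∈ n.divisorsAntidiagonal, ∑ x ∈ Ico 1 p.2, F p.1 p.1 x (p.2 - x) := by
  simp only [solSum, ← sum_filter]
  rw [sum_sigma']
  refine sum_nbij' (fun v => ⟨(v.1, v.2.2.1 + v.2.2.2), v.2.2.1⟩)
    (fun q => (q.1.1, q.1.1, q.2, q.1.2 - q.2)) ?_ ?_ ?_ ?_ ?_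
  · rintro ⟨a, b, x, y⟩ hv
    obtain ⟨hv, hab : a = b⟩ := mem_filter.1 hv
    obtain ⟨ha, -, hx, hy, h⟩ := mem_solutions.1 hv
    subst hab
    have hax := Nat.mul_pos ha hx
    simp only [mem_sigma, Nat.mem_divisorsAntidiagonal, mem_Ico]
    exact ⟨⟨by rw [← h]; ring, by omega⟩, hx, by omega⟩
  · rintro ⟨⟨d, e⟩, x⟩ hq
    have hd : 0 < d := Nat.pos_of_ne_zero (Nat.left_ne_zero_of_mem_divisorsAntidiagonal
      (mem_sigma.1 hq).1)
    simp only [mem_sigma, Nat.mem_divisorsAntidiagonal, mem_Ico] at hq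
    obtain ⟨⟨h, -⟩, hx, hxe⟩ := hq
    dsimp only
    refine mem_filter.2 ⟨mem_solutions.2 ⟨hd, hd, hx, by omega, ?_⟩, rfl⟩
    rw [← h, ← mul_add, Nat.add_sub_cancel' hxe.le]
  · rintro ⟨a, b, x, y⟩ hv
    obtain ⟨-, hab : a = b⟩ := mem_filter.1 hv
    simp [hab]
  · rintro ⟨⟨d, e⟩, x⟩ hq
    have hxe : x < e := (mem_Ico.1 (mem_sigma.1 hq).2).2
    simp only [Sigma.mk.injEq, Prod.mk.injEq, true_and, heq_eq_eq, and_true]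
    omega
  · rintro ⟨a, b, x, y⟩ hv
    obtain ⟨-, hab : a = b⟩ := mem_filter.1 hv
    simp [hab]

theorem solSum_ite_eq_xy (F : ℕ → ℕ → ℕ → ℕ → ℚ) :
    solSum n (fun a b x y => if x = y then F a b x y else 0) =
      ∑ p ∈ n.divisorsAntidiagonal, ∑ a ∈ Ico 1 p.2, F a (p.2 - a) p.1 p.1 := by
  rw [solSum_transpose, solSum_ite_eq_ab (fun a b x y => F x y a b)]

theorem sum_Ico_one_quadratic (c₀ c₁ c₂ : ℚ) {e : ℕ} (he : 1 ≤ e) :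
    ∑ x ∈ Ico 1 e, (c₀ + c₁ * x + c₂ * x ^ 2) =
      c₀ * (e - 1) + c₁ * (e ^ 2 - e) / 2 + c₂ * (2 * e ^ 3 - 3 * e ^ 2 + e) / 6 := by
  induction e, he using Nat.le_induction with
  | base => norm_num
  | succ e he ih =>
    rw [sum_Ico_succ_top he, ih]
    push_cast
    ring

theorem cast_sigmaFn (k n : ℕ) : (sigmaFn k n : ℚ) = ∑ d ∈ n.divisors, (d : ℚ) ^ k := by
  simp [sigmaFn]

theorem solSum_ite_eq_ab_mul_add :
    solSum n (fun a b x y => if a = b then (b : ℚ) * x * y * (x + y) else 0) =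
      n * (sigmaFn 3 n - sigmaFn 1 n) / 6 := by
  have hinner : ∀ p ∈ n.divisorsAntidiagonal,
      ∑ x ∈ Ico 1 p.2, (p.1 : ℚ) * x * ((p.2 - x : ℕ) : ℚ) * (x + ((p.2 - x : ℕ) : ℚ)) =
        n * ((p.2 : ℚ) ^ 3 - p.2) / 6 := by
    rintro ⟨d, e⟩ hp
    have he : 1 ≤ e := Nat.one_le_iff_ne_zero.2 (Nat.right_ne_zero_of_mem_divisorsAntidiagonal hp)
    obtain ⟨rfl, -⟩ := Nat.mem_divisorsAntidiagonal.1 hp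
    calc _ = ∑ x ∈ Ico 1 e, (0 + (d * e ^ 2 : ℚ) * x + (-(d * e : ℚ)) * x ^ 2) :=
          sum_congr rfl fun x hx => by rw [Nat.cast_sub (mem_Ico.1 hx).2.le]; ring
      _ = _ := by rw [sum_Ico_one_quadratic _ _ _ he]; push_cast; ring
  rw [solSum_ite_eq_ab, sum_congr rfl hinner,
    Nat.sum_divisorsAntidiagonal' (fun _ e => (n : ℚ) * ((e : ℚ) ^ 3 - e) / 6),
    cast_sigmaFn, cast_sigmaFn, ← sum_sub_distrib, mul_sum, sum_div]
  simp

theorem solSum_ite_eq_ab_sq :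
    solSum n (fun a b _ _ => if a = b then (a : ℚ) ^ 2 else 0) =
      n * sigmaFn 1 n - sigmaFn 2 n := by
  have hinner : ∀ p ∈ n.divisorsAntidiagonal,
      ∑ _x ∈ Ico 1 p.2, (p.1 : ℚ) ^ 2 = n * p.1 - p.1 ^ 2 := by
    rintro ⟨d, e⟩ hp
    have he : 1 ≤ e := Nat.one_le_iff_ne_zero.2 (Nat.right_ne_zero_of_mem_divisorsAntidiagonal hp)
    obtain ⟨rfl, -⟩ := Nat.mem_divisorsAntidiagonal.1 hp
    simp only [sum_const, Nat.card_Ico, nsmul_eq_mul, Nat.cast_sub he]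
    push_cast
    ring
  rw [solSum_ite_eq_ab, sum_congr rfl hinner,
    Nat.sum_divisorsAntidiagonal (fun d _ => (n : ℚ) * d - d ^ 2),
    cast_sigmaFn, cast_sigmaFn, sum_sub_distrib, mul_sum]
  simp

theorem solSum_ite_eq_xy_sq :
    solSum n (fun a _ x y => if x = y then (a : ℚ) ^ 2 else 0) =
      (2 * sigmaFn 3 n - 3 * sigmaFn 2 n + sigmaFn 1 n) / 6 := by
  have hinner : ∀ p ∈ n.divisorsAntidiagonal,
      ∑ a ∈ Ico 1 p.2, (a : ℚ) ^ 2 = (2 * (p.2 : ℚ) ^ 3 - 3 * (p.2 : ℚ) ^ 2 + p.2) / 6 := by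
    rintro ⟨d, e⟩ hp
    have he : 1 ≤ e := Nat.one_le_iff_ne_zero.2 (Nat.right_ne_zero_of_mem_divisorsAntidiagonal hp)
    obtain ⟨rfl, -⟩ := Nat.mem_divisorsAntidiagonal.1 hp
    calc _ = ∑ a ∈ Ico 1 e, (0 + 0 * (a : ℚ) + 1 * a ^ 2) := sum_congr rfl fun a _ => by ring
      _ = _ := by rw [sum_Ico_one_quadratic _ _ _ he]; ring
  rw [solSum_ite_eq_xy, sum_congr rfl hinner,
    Nat.sum_divisorsAntidiagonal' (fun _ e => (2 * (e : ℚ) ^ 3 - 3 * (e : ℚ) ^ 2 + e) / 6),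
    cast_sigmaFn, cast_sigmaFn, cast_sigmaFn, ← sum_div, sum_add_distrib, sum_sub_distrib,
    mul_sum, mul_sum]
  simp

theorem solSum_ite_eq_xy_add_sq :
    solSum n (fun a b x y => if x = y then ((a : ℚ) + b) ^ 2 else 0) =
      sigmaFn 3 n - sigmaFn 2 n := by
  have hinner : ∀ p ∈ n.divisorsAntidiagonal,
      ∑ a ∈ Ico 1 p.2, ((a : ℚ) + ((p.2 - a : ℕ) : ℚ)) ^ 2 = (p.2 : ℚ) ^ 3 - p.2 ^ 2 := by
    rintro ⟨d, e⟩ hp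
    have he : 1 ≤ e := Nat.one_le_iff_ne_zero.2 (Nat.right_ne_zero_of_mem_divisorsAntidiagonal hp)
    obtain ⟨rfl, -⟩ := Nat.mem_divisorsAntidiagonal.1 hp
    calc _ = ∑ _a ∈ Ico 1 e, (e : ℚ) ^ 2 :=
          sum_congr rfl fun a ha => by rw [Nat.cast_sub (mem_Ico.1 ha).2.le]; ring
      _ = _ := by
          simp only [sum_const, Nat.card_Ico, nsmul_eq_mul, Nat.cast_sub he]
          push_cast
          ring
  rw [solSum_ite_eq_xy, sum_congr rfl hinner,
    Nat.sum_divisorsAntidiagonal' (fun _ e => (e : ℚ) ^ 3 - e ^ 2),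
    cast_sigmaFn, cast_sigmaFn, sum_sub_distrib]

theorem solSum_mul_eq_sigma :
    solSum n (fun _ _ x y => (x : ℚ) * y) =
      (5 * sigmaFn 3 n + sigmaFn 1 n - 6 * n * sigmaFn 1 n : ℚ) / 12 := by
  have hsub : solSum n (fun a b _ _ => ((a : ℚ) - b) ^ 2) =
      solSum n (fun a b _ _ => if b < a then 2 * ((a : ℚ) - b) ^ 2 else 0) := by
    rw [solSum_split_ab, solSum_eq_zero fun a b x y _ => by split_ifs with h <;> simp [h],
      zero_add]
    exact solSum_congr fun a b x y _ => by split_ifs <;> ring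
  have hadd : solSum n (fun a b _ _ => ((a : ℚ) + b) ^ 2) =
      solSum n (fun a b x y => if x = y then ((a : ℚ) + b) ^ 2 else 0) +
        solSum n (fun a b _ _ => if b < a then 2 * (a : ℚ) ^ 2 else 0) := by
    rw [solSum_split_xy, solSum_ite_lt_xy]
    congr 1
    exact solSum_congr fun a b x y _ => by split_ifs with h <;> [(push_cast [h.le]; ring); rfl]
  have hsq_xy : solSum n (fun a _ _ _ => (a : ℚ) ^ 2) =
      solSum n (fun a _ x y => if x = y then (a : ℚ) ^ 2 else 0) +
        solSum n (fun a b _ _ => if b < a then ((a : ℚ) - b) ^ 2 + (b : ℚ) ^ 2 else 0) := by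
    rw [solSum_split_xy, solSum_ite_lt_xy]
    congr 1
    exact solSum_congr fun a b x y _ => by split_ifs with h <;> [(push_cast [h.le]; ring); rfl]
  have hsq_ab : solSum n (fun a _ _ _ => (a : ℚ) ^ 2) =
      solSum n (fun a b _ _ => if a = b then (a : ℚ) ^ 2 else 0) +
        solSum n (fun a b _ _ => if b < a then (a : ℚ) ^ 2 + (b : ℚ) ^ 2 else 0) :=
    solSum_split_ab _
  have hfold : solSum n (fun a b _ _ => if b < a then 2 * ((a : ℚ) - b) ^ 2 else 0) -
      solSum n (fun a b _ _ => if b < a then 2 * (a : ℚ) ^ 2 else 0) =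
      2 * (solSum n (fun a b _ _ => if b < a then ((a : ℚ) - b) ^ 2 + (b : ℚ) ^ 2 else 0) -
        solSum n (fun a b _ _ => if b < a then (a : ℚ) ^ 2 + (b : ℚ) ^ 2 else 0)) := by
    simp only [← solSum_sub, ← solSum_const_mul]
    exact solSum_congr fun a b x y _ => by split_ifs <;> ring
  have hpolar : solSum n (fun a b _ _ => ((a : ℚ) - b) ^ 2) -
      solSum n (fun a b _ _ => ((a : ℚ) + b) ^ 2) = -4 * solSum n (fun _ _ x y => (x : ℚ) * y) := by
    rw [solSum_transpose (fun _ _ x y => (x : ℚ) * y), ← solSum_sub, ← solSum_const_mul]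
    exact solSum_congr fun a b x y _ => by ring
  rw [solSum_ite_eq_xy_add_sq] at hadd
  rw [solSum_ite_eq_xy_sq] at hsq_xy
  rw [solSum_ite_eq_ab_sq] at hsq_ab
  linear_combination (1 / 4 : ℚ) * (hpolar - hsub + hadd - hfold + 2 * hsq_xy - 2 * hsq_ab)

theorem three_mul_solSum_ite_lt_ab :
    3 * solSum n (fun a b x y => if b < a then (b : ℚ) * x * y * (x + y) else 0) =
      n * solSum n (fun _ _ x y => (x : ℚ) * y) -
        solSum n (fun a b x y => if a = b then (b : ℚ) * x * y * (x + y) else 0) := by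
  have hplus : solSum n (fun _ b x y => (b : ℚ) * x * y * (x + y)) =
      solSum n (fun a b x y => if a = b then (b : ℚ) * x * y * (x + y) else 0) +
        solSum n (fun a b x y => if b < a then ((a : ℚ) + b) * x * y * (x + y) else 0) := by
    rw [solSum_split_ab]
    congr 1
    exact solSum_congr fun a b x y _ => by split_ifs <;> ring
  have hminus : solSum n (fun _ b x y => (b : ℚ) * x * y * (y - x)) =
      solSum n (fun a b x y => if b < a then (2 * (b : ℚ) - a) * x * y * (x + y) else 0) := by
    rw [solSum_split_xy, solSum_ite_lt_xy,
      solSum_eq_zero fun a b x y _ => by split_ifs with h <;> simp [h], zero_add]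
    exact solSum_congr fun a b x y _ => by split_ifs with h <;> [(push_cast [h.le]; ring); rfl]
  have hfold : solSum n (fun a b x y => if b < a then ((a : ℚ) + b) * x * y * (x + y) else 0) +
      solSum n (fun a b x y => if b < a then (2 * (b : ℚ) - a) * x * y * (x + y) else 0) =
      3 * solSum n (fun a b x y => if b < a then (b : ℚ) * x * y * (x + y) else 0) := by
    rw [← solSum_add, ← solSum_const_mul]
    exact solSum_congr fun a b x y _ => by split_ifs <;> ring
  have hsum : solSum n (fun _ b x y => (b : ℚ) * x * y * (x + y)) +
      solSum n (fun _ b x y => (b : ℚ) * x * y * (y - x)) =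
      n * solSum n (fun _ _ x y => (x : ℚ) * y) :=
    calc _ = solSum n (fun _ b x y => (b : ℚ) * x * y ^ 2) +
          solSum n (fun _ b x y => (b : ℚ) * x * y ^ 2) := by
          rw [← solSum_add, ← solSum_add]
          exact solSum_congr fun a b x y _ => by ring
      _ = solSum n (fun _ b x y => (b : ℚ) * x * y ^ 2) +
          solSum n (fun a _ x y => (a : ℚ) * y * x ^ 2) := by
          rw [← solSum_swap (fun _ b x y => (b : ℚ) * x * y ^ 2)]
      _ = _ := by
          rw [← solSum_add, ← solSum_const_mul]
          exact solSum_congr fun a b x y h => by rw [← h]; push_cast; ring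
  linear_combination hsum - hplus - hminus - hfold

theorem sum_filter_eq_solSum (G : ℕ → ℕ → ℕ → ℕ → ℚ) :
    ∑ v ∈ (Icc 1 n ×ˢ Icc 1 n ×ˢ Icc 1 n ×ˢ Icc 1 n).filter
        (fun v => v.1 * v.2.2.1 + v.2.1 * (v.2.2.1 + v.2.2.2) = n),
      G v.1 v.2.1 v.2.2.1 v.2.2.2 =
      solSum n (fun a b x y => if b < a then G (a - b) b x y else 0) := by
  simp only [solSum, ← sum_filter]
  refine sum_nbij' (fun v => (v.1 + v.2.1, v.2.1, v.2.2.1, v.2.2.2))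
    (fun v => (v.1 - v.2.1, v.2.1, v.2.2.1, v.2.2.2)) ?_ ?_ ?_ ?_ ?_
  · rintro ⟨p, q, k, l⟩ hv
    simp only [mem_filter, mem_product, mem_Icc] at hv
    obtain ⟨⟨⟨hp, -⟩, ⟨hq, -⟩, ⟨hk, -⟩, ⟨hl, -⟩⟩, h⟩ := hv
    refine mem_filter.2 ⟨mem_solutions.2 ⟨by omega, hq, hk, hl, by rw [← h]; ring⟩, ?_⟩
    dsimp only
    omega
  · rintro ⟨a, b, x, y⟩ hv
    obtain ⟨hv, hba : b < a⟩ := mem_filter.1 hv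
    obtain ⟨ha, hb, hx, hy, h⟩ := mem_solutions.1 hv
    obtain ⟨c, rfl⟩ := Nat.exists_eq_add_of_lt hba
    simp only [mem_filter, mem_product, mem_Icc, show b + c + 1 - b = c + 1 by omega]
    refine ⟨⟨⟨by omega, ?_⟩, ⟨hb, ?_⟩, ⟨hx, ?_⟩, ⟨hy, ?_⟩⟩, by rw [← h]; ring⟩ <;> nlinarith
  · rintro ⟨p, q, k, l⟩ -
    simp
  · rintro ⟨a, b, x, y⟩ hv
    have hba : b < a := (mem_filter.1 hv).2
    simp only [Prod.mk.injEq, and_true]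
    omega
  · rintro ⟨p, q, k, l⟩ -
    simp

end LiouvilleMethod

open LiouvilleMethod

theorem sum_qkl_eq_general (n : ℕ) :
    (∑ v ∈ (Finset.Icc 1 n ×ˢ Finset.Icc 1 n ×ˢ Finset.Icc 1 n ×ˢ Finset.Icc 1 n).filter
        (fun v : ℕ × ℕ × ℕ × ℕ =>
          v.1 * v.2.2.1 + v.2.1 * (v.2.2.1 + v.2.2.2) = n),
      ((v.2.1 : ℚ) * v.2.2.1 * v.2.2.2 * ((v.2.2.1 : ℚ) + v.2.2.2)))
    = (1 / 12) * (n : ℚ) * sigmaFn 3 n + (1 / 12) * (n : ℚ) * sigmaFn 1 n -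
        (1 / 6) * (n : ℚ) ^ 2 * sigmaFn 1 n := by
  have h := three_mul_solSum_ite_lt_ab (n := n)
  rw [solSum_mul_eq_sigma, solSum_ite_eq_ab_mul_add] at h
  rw [sum_filter_eq_solSum fun _ q k l => (q : ℚ) * k * l * (k + l)]
  linear_combination h / 3

theorem sum_qkl_eq (n : ℕ) (hn : 0 < n) :
    (∑ v ∈ (Finset.Icc 1 n ×ˢ Finset.Icc 1 n ×ˢ Finset.Icc 1 n ×ˢ Finset.Icc 1 n).filter
        (fun v : ℕ × ℕ × ℕ × ℕ =>
          v.1 * v.2.2.1 + v.2.1 * (v.2.2.1 + v.2.2.2) = n),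
      ((v.2.1 : ℚ) * v.2.2.1 * v.2.2.2 * ((v.2.2.1 : ℚ) + v.2.2.2)))
    = (1 / 12) * (n : ℚ) * sigmaFn 3 n + (1 / 12) * (n : ℚ) * sigmaFn 1 n -
        (1 / 6) * (n : ℚ) ^ 2 * sigmaFn 1 n :=
  sum_qkl_eq_general n
end

section
/- For every positive integer n, the sum of k·m over all quadruples (p, q, k, m) of positive integers with k > m and p·k + q·m = n equals (5/24)·σ₃(n) + (1/2)·σ₂(n) + (1/24)·σ₁(n) − (3/4)·n·σ₁(n). -/
open Finset

namespace SumKM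

variable {M : Type*} [AddCommMonoid M] {n : ℕ}

lemma sum_filter_lt_add_sum_filter_eq_add_sum_filter_gt {α β : Type*} [LinearOrder β]
    (s : Finset α) (a b : α → β) (f : α → M) :
    ∑ x ∈ s.filter (fun x => a x < b x), f x + ∑ x ∈ s.filter (fun x => a x = b x), f x
      + ∑ x ∈ s.filter (fun x => b x < a x), f x = ∑ x ∈ s, f x := by
  symm
  rw [← sum_filter_add_sum_filter_not s (fun x => a x < b x), add_assoc]
  congr 1
  rw [← sum_filter_add_sum_filter_not (s.filter fun x => ¬a x < b x) (fun x => a x = b x),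
    filter_filter, filter_filter]
  congr 1 <;> refine sum_congr (filter_congr fun x _ => ?_) fun _ _ => rfl <;> grind

def solutions (n : ℕ) : Finset (ℕ × ℕ × ℕ × ℕ) :=
  (Icc 1 n ×ˢ Icc 1 n ×ˢ Icc 1 n ×ˢ Icc 1 n).filter
    (fun v => v.1 * v.2.2.1 + v.2.1 * v.2.2.2 = n)

@[simp]
lemma mk_mem_solutions {n p q k m : ℕ} :
    (p, q, k, m) ∈ solutions n ↔ 0 < p ∧ 0 < q ∧ 0 < k ∧ 0 < m ∧ p * k + q * m = n := by
  simp only [solutions, mem_filter, mem_product, mem_Icc]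
  constructor
  · rintro ⟨⟨⟨hp, -⟩, ⟨hq, -⟩, ⟨hk, -⟩, hm, -⟩, h⟩
    exact ⟨hp, hq, hk, hm, h⟩
  · rintro ⟨hp, hq, hk, hm, rfl⟩
    refine ⟨⟨⟨hp, ?_⟩, ⟨hq, ?_⟩, ⟨hk, ?_⟩, hm, ?_⟩, rfl⟩ <;> nlinarith

def swap (v : ℕ × ℕ × ℕ × ℕ) : ℕ × ℕ × ℕ × ℕ := (v.2.1, v.1, v.2.2.2, v.2.2.1)

lemma sum_solutions_comp_swap (F : ℕ × ℕ × ℕ × ℕ → M) :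
    ∑ v ∈ solutions n, F (swap v) = ∑ v ∈ solutions n, F v := by
  have hmem : ∀ v ∈ solutions n, swap v ∈ solutions n := by
    rintro ⟨p, q, k, m⟩ hv
    simp only [swap, mk_mem_solutions] at hv ⊢
    omega
  exact sum_nbij' swap swap hmem hmem (fun _ _ => rfl) (fun _ _ => rfl) (fun _ _ => rfl)

lemma sum_solutions_split_km (g : ℕ → ℕ → M) (hg : ∀ k m, g k m = g m k) :
    ∑ v ∈ solutions n, g v.2.2.1 v.2.2.2
      = ∑ v ∈ (solutions n).filter (fun v => v.2.2.2 < v.2.2.1), g v.2.2.1 v.2.2.2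
        + ∑ v ∈ (solutions n).filter (fun v => v.2.2.2 < v.2.2.1), g v.2.2.1 v.2.2.2
        + ∑ v ∈ (solutions n).filter (fun v => v.2.2.1 = v.2.2.2), g v.2.2.1 v.2.2.2 := by
  have hswap : ∑ v ∈ (solutions n).filter (fun v => v.2.2.1 < v.2.2.2), g v.2.2.1 v.2.2.2
      = ∑ v ∈ (solutions n).filter (fun v => v.2.2.2 < v.2.2.1), g v.2.2.1 v.2.2.2 := by
    rw [sum_filter, sum_filter, ← sum_solutions_comp_swap]
    exact sum_congr rfl fun v _ => by simp only [swap, hg]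
  rw [← sum_filter_lt_add_sum_filter_eq_add_sum_filter_gt _ (fun v => v.2.2.1) (fun v => v.2.2.2),
    hswap, add_comm, add_assoc]

lemma sum_solutions_split_pq (g : ℕ → ℕ → M) (hg : ∀ k m, g k m = g m k) :
    ∑ v ∈ solutions n, g v.2.2.1 v.2.2.2
      = ∑ v ∈ (solutions n).filter (fun v => v.1 < v.2.1), g v.2.2.1 v.2.2.2
        + ∑ v ∈ (solutions n).filter (fun v => v.1 < v.2.1), g v.2.2.1 v.2.2.2
        + ∑ v ∈ (solutions n).filter (fun v => v.1 = v.2.1), g v.2.2.1 v.2.2.2 := by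
  have hswap : ∑ v ∈ (solutions n).filter (fun v => v.2.1 < v.1), g v.2.2.1 v.2.2.2
      = ∑ v ∈ (solutions n).filter (fun v => v.1 < v.2.1), g v.2.2.1 v.2.2.2 := by
    rw [sum_filter, sum_filter, ← sum_solutions_comp_swap]
    exact sum_congr rfl fun v _ => by simp only [swap, hg]
  rw [← sum_filter_lt_add_sum_filter_eq_add_sum_filter_gt _ (fun v => v.1) (fun v => v.2.1), hswap,
    add_right_comm]

lemma sum_filter_p_lt_q (g : ℕ → ℕ → M) :
    ∑ v ∈ (solutions n).filter (fun v => v.1 < v.2.1), g v.2.2.1 v.2.2.2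
      = ∑ v ∈ (solutions n).filter (fun v => v.2.2.2 < v.2.2.1),
          g (v.2.2.1 - v.2.2.2) v.2.2.2 := by
  refine sum_nbij' (fun v => (v.1, v.2.1 - v.1, v.2.2.1 + v.2.2.2, v.2.2.2))
    (fun v => (v.1, v.1 + v.2.1, v.2.2.1 - v.2.2.2, v.2.2.2)) ?_ ?_ ?_ ?_ ?_
  · rintro ⟨p, q, k, m⟩ hv
    simp only [mem_filter, mk_mem_solutions] at hv ⊢
    obtain ⟨⟨hp, -, hk, hm, rfl⟩, hpq⟩ := hv
    obtain ⟨t, rfl⟩ := Nat.exists_eq_add_of_lt hpq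
    refine ⟨⟨hp, by omega, by omega, hm, ?_⟩, by omega⟩
    rw [show p + t + 1 - p = t + 1 by omega]
    ring
  · rintro ⟨p, q, k, m⟩ hv
    simp only [mem_filter, mk_mem_solutions] at hv ⊢
    obtain ⟨⟨hp, hq, -, hm, rfl⟩, hmk⟩ := hv
    obtain ⟨t, rfl⟩ := Nat.exists_eq_add_of_lt hmk
    refine ⟨⟨hp, by omega, by omega, hm, ?_⟩, by omega⟩
    rw [show m + t + 1 - m = t + 1 by omega]
    ring
  · rintro ⟨p, q, k, m⟩ hv
    simp only [mem_filter] at hv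
    simp only [Prod.mk.injEq, true_and, and_true]
    omega
  · rintro ⟨p, q, k, m⟩ hv
    simp only [mem_filter] at hv
    simp only [Prod.mk.injEq, true_and, and_true]
    omega
  · intro v _
    simp only [Nat.add_sub_cancel]

lemma sum_filter_k_eq_m (g : ℕ → ℕ → M) :
    ∑ v ∈ (solutions n).filter (fun v => v.2.2.1 = v.2.2.2), g v.2.2.1 v.2.2.2
      = ∑ x ∈ n.divisorsAntidiagonal, (x.2 - 1) • g x.1 x.1 := by
  have hsigma : ∑ v ∈ (solutions n).filter (fun v => v.2.2.1 = v.2.2.2), g v.2.2.1 v.2.2.2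
      = ∑ x ∈ n.divisorsAntidiagonal.sigma (fun x => Ico 1 x.2), g x.1.1 x.1.1 := by
    refine sum_nbij' (fun v => ⟨(v.2.2.1, v.1 + v.2.1), v.1⟩)
      (fun x => (x.2, x.1.2 - x.2, x.1.1, x.1.1)) ?_ ?_ ?_ ?_ ?_
    · rintro ⟨p, q, k, m⟩ hv
      simp only [mem_filter, mk_mem_solutions] at hv
      obtain ⟨⟨hp, hq, hk, -, rfl⟩, rfl⟩ := hv
      simp only [mem_sigma, Nat.mem_divisorsAntidiagonal, mem_Ico]
      refine ⟨⟨by ring, by positivity⟩, hp, by omega⟩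
    · rintro ⟨⟨k, c⟩, p⟩ hx
      simp only [mem_sigma, Nat.mem_divisorsAntidiagonal, mem_Ico] at hx
      obtain ⟨⟨rfl, hn⟩, hp, hpc⟩ := hx
      have hk : 0 < k := Nat.pos_of_ne_zero (left_ne_zero_of_mul hn)
      simp only [mem_filter, mk_mem_solutions, and_true]
      refine ⟨hp, by omega, hk, hk, ?_⟩
      rw [← add_mul, Nat.add_sub_cancel' hpc.le, mul_comm]
    · rintro ⟨p, q, k, m⟩ hv
      simp only [mem_filter] at hv
      simp only [Prod.mk.injEq, true_and]
      omega
    · rintro ⟨⟨k, c⟩, p⟩ hx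
      simp only [mem_sigma, mem_Ico] at hx
      simp only [Nat.add_sub_cancel' hx.2.2.le]
    · intro v hv
      simp only [(mem_filter.mp hv).2]
  rw [hsigma, sum_sigma]
  exact sum_congr rfl fun x _ => by simp only [sum_const, Nat.card_Ico]

lemma sum_filter_p_eq_q (g : ℕ → ℕ → M) :
    ∑ v ∈ (solutions n).filter (fun v => v.1 = v.2.1), g v.2.2.1 v.2.2.2
      = ∑ x ∈ n.divisorsAntidiagonal, ∑ k ∈ Ico 1 x.2, g k (x.2 - k) := by
  rw [sum_sigma']
  refine sum_nbij' (fun v => ⟨(v.1, v.2.2.1 + v.2.2.2), v.2.2.1⟩)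
    (fun x => (x.1.1, x.1.1, x.2, x.1.2 - x.2)) ?_ ?_ ?_ ?_ ?_
  · rintro ⟨p, q, k, m⟩ hv
    simp only [mem_filter, mk_mem_solutions] at hv
    obtain ⟨⟨hp, -, hk, hm, rfl⟩, rfl⟩ := hv
    simp only [mem_sigma, Nat.mem_divisorsAntidiagonal, mem_Ico]
    refine ⟨⟨by ring, by positivity⟩, hk, by omega⟩
  · rintro ⟨⟨p, c⟩, k⟩ hx
    simp only [mem_sigma, Nat.mem_divisorsAntidiagonal, mem_Ico] at hx
    obtain ⟨⟨rfl, hn⟩, hk, hkc⟩ := hx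
    have hp : 0 < p := Nat.pos_of_ne_zero (left_ne_zero_of_mul hn)
    simp only [mem_filter, mk_mem_solutions, and_true]
    refine ⟨hp, hp, hk, by omega, ?_⟩
    rw [← mul_add, Nat.add_sub_cancel' hkc.le]
  · rintro ⟨p, q, k, m⟩ hv
    simp only [mem_filter] at hv
    simp only [Prod.mk.injEq, true_and]
    omega
  · rintro ⟨⟨p, c⟩, k⟩ hx
    simp only [mem_sigma, mem_Ico] at hx
    simp only [Nat.add_sub_cancel' hx.2.2.le]
  · intro v _
    simp only [Nat.add_sub_cancel_left]

def eisensteinNorm (k m : ℕ) : ℚ := k ^ 2 + k * m + m ^ 2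

lemma eisensteinNorm_comm (k m : ℕ) : eisensteinNorm k m = eisensteinNorm m k := by
  unfold eisensteinNorm
  ring

lemma sum_range_sq_sub_mul_add_sq (a : ℚ) (N : ℕ) :
    ∑ k ∈ range N, (a ^ 2 - a * k + k ^ 2)
      = N * a ^ 2 - a * N * (N - 1) / 2 + N * (N - 1) * (2 * N - 1) / 6 := by
  induction N with
  | zero => simp
  | succ N ih =>
    rw [sum_range_succ, ih]
    push_cast
    ring

lemma sum_Ico_eisensteinNorm (c : ℕ) :
    ∑ k ∈ Ico 1 c, eisensteinNorm k (c - k) = (5 * c ^ 3 - 6 * c ^ 2 + c) / 6 := by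
  rcases Nat.eq_zero_or_pos c with rfl | hc
  · simp
  have hsummand : ∀ k ∈ range c, eisensteinNorm k (c - k) = c ^ 2 - c * k + k ^ 2 := by
    intro k hk
    rw [eisensteinNorm, Nat.cast_sub (mem_range.mp hk).le]
    ring
  have hrange := sum_range_sq_sub_mul_add_sq c c
  have hzero : eisensteinNorm 0 (c - 0) = c ^ 2 := by simp [eisensteinNorm]
  rw [← sum_congr rfl hsummand, sum_range_eq_add_Ico _ hc, hzero] at hrange
  linear_combination hrange

lemma sum_filter_k_eq_m_eisensteinNorm :
    ∑ v ∈ (solutions n).filter (fun v => v.2.2.1 = v.2.2.2), eisensteinNorm v.2.2.1 v.2.2.2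
      = 3 * n * sigmaFn 1 n - 3 * sigmaFn 2 n := by
  rw [sum_filter_k_eq_m]
  have hterm : ∀ x ∈ n.divisorsAntidiagonal,
      (x.2 - 1) • eisensteinNorm x.1 x.1 = 3 * x.1 * n - 3 * x.1 ^ 2 := by
    rintro ⟨k, c⟩ hx
    obtain ⟨rfl, hn⟩ := Nat.mem_divisorsAntidiagonal.mp hx
    rw [nsmul_eq_mul, Nat.cast_pred (Nat.pos_of_ne_zero (right_ne_zero_of_mul hn)),
      eisensteinNorm]
    push_cast
    ring
  rw [sum_congr rfl hterm, Nat.sum_divisorsAntidiagonal (fun k _ => 3 * (k : ℚ) * n - 3 * k ^ 2)]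
  simp only [sigmaFn, pow_one]
  push_cast
  rw [sum_sub_distrib, mul_sum, mul_sum]
  exact congrArg₂ _ (sum_congr rfl fun _ _ => by ring) rfl

lemma sum_filter_p_eq_q_eisensteinNorm :
    ∑ v ∈ (solutions n).filter (fun v => v.1 = v.2.1), eisensteinNorm v.2.2.1 v.2.2.2
      = (5 * sigmaFn 3 n - 6 * sigmaFn 2 n + sigmaFn 1 n) / 6 := by
  rw [sum_filter_p_eq_q, sum_congr rfl fun x _ => sum_Ico_eisensteinNorm x.2,
    Nat.sum_divisorsAntidiagonal' (fun _ c => (5 * (c : ℚ) ^ 3 - 6 * c ^ 2 + c) / 6)]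
  simp only [sigmaFn, pow_one]
  push_cast
  rw [← sum_div, sum_add_distrib, sum_sub_distrib, mul_sum, mul_sum]

lemma sum_filter_m_lt_k_eisensteinNorm_sub :
    ∑ v ∈ (solutions n).filter (fun v => v.2.2.2 < v.2.2.1), eisensteinNorm v.2.2.1 v.2.2.2
      - ∑ v ∈ (solutions n).filter (fun v => v.1 < v.2.1), eisensteinNorm v.2.2.1 v.2.2.2
      = 2 * ∑ v ∈ (solutions n).filter (fun v => v.2.2.2 < v.2.2.1),
          (v.2.2.1 : ℚ) * v.2.2.2 := by
  rw [sum_filter_p_lt_q, mul_sum, ← sum_sub_distrib]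
  refine sum_congr rfl fun v hv => ?_
  rw [eisensteinNorm, eisensteinNorm, Nat.cast_sub (mem_filter.mp hv).2.le]
  ring

end SumKM

open SumKM in
theorem sum_km_eq_general (n : ℕ) :
    (∑ v ∈ (Finset.Icc 1 n ×ˢ Finset.Icc 1 n ×ˢ Finset.Icc 1 n ×ˢ Finset.Icc 1 n).filter
        (fun v : ℕ × ℕ × ℕ × ℕ => v.2.2.2 < v.2.2.1 ∧
          v.1 * v.2.2.1 + v.2.1 * v.2.2.2 = n),
      ((v.2.2.1 : ℚ) * (v.2.2.2 : ℚ)))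
    = (5 / 24) * sigmaFn 3 n + (1 / 2) * sigmaFn 2 n + (1 / 24) * sigmaFn 1 n -
        (3 / 4) * (n : ℚ) * sigmaFn 1 n := by
  have hset : (Icc 1 n ×ˢ Icc 1 n ×ˢ Icc 1 n ×ˢ Icc 1 n).filter
      (fun v : ℕ × ℕ × ℕ × ℕ => v.2.2.2 < v.2.2.1 ∧ v.1 * v.2.2.1 + v.2.1 * v.2.2.2 = n)
      = (solutions n).filter (fun v => v.2.2.2 < v.2.2.1) := by
    rw [solutions, filter_filter]
    exact filter_congr fun _ _ => and_comm
  have hkm := sum_solutions_split_km (n := n) eisensteinNorm eisensteinNorm_comm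
  have hpq := sum_solutions_split_pq (n := n) eisensteinNorm eisensteinNorm_comm
  rw [sum_filter_k_eq_m_eisensteinNorm] at hkm
  rw [sum_filter_p_eq_q_eisensteinNorm] at hpq
  rw [hset]
  linarith [sum_filter_m_lt_k_eisensteinNorm_sub (n := n)]

theorem sum_km_eq (n : ℕ) (hn : 0 < n) :
    (∑ v ∈ (Finset.Icc 1 n ×ˢ Finset.Icc 1 n ×ˢ Finset.Icc 1 n ×ˢ Finset.Icc 1 n).filter
        (fun v : ℕ × ℕ × ℕ × ℕ => v.2.2.2 < v.2.2.1 ∧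
          v.1 * v.2.2.1 + v.2.1 * v.2.2.2 = n),
      ((v.2.2.1 : ℚ) * (v.2.2.2 : ℚ)))
    = (5 / 24) * sigmaFn 3 n + (1 / 2) * sigmaFn 2 n + (1 / 24) * sigmaFn 1 n -
        (3 / 4) * (n : ℚ) * sigmaFn 1 n :=
  sum_km_eq_general n
end
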